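/- arXiv:1709.03097 — 10 statements merged into one kernel-verified Lean document; each statement's English description precedes it below -/
import Mathlib

section
/- The function δ(A) := (1 + d̄(A))/2 if d̄(A) > 0, and δ(A) := 0 if d̄(A) = 0 (where d̄ is the upper asymptotic density) is a translation invariant abstract upper density whose range is {0} ∪ (1/2, 1]. -/
open scoped Classical
open Filter

/-- An abstract upper density on `ℕ`: takes values in `[0,1]`, assigns `1` to
the whole set, `0` to finite sets, and is monotone and subadditive. -/
def IsUpperDensity (δ : Set ℕ → ℝ) : Prop :=
  (∀ A : Set ℕ, 0 ≤ δ A ∧ δ A ≤ 1) ∧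
  δ Set.univ = 1 ∧
  (∀ A : Set ℕ, A.Finite → δ A = 0) ∧
  (∀ A B : Set ℕ, A ⊆ B → δ A ≤ δ B) ∧
  (∀ A B : Set ℕ, δ (A ∪ B) ≤ δ A + δ B)

/-- Rightward translation of a set of naturals: `A + m`. -/
def rTrans (A : Set ℕ) (m : ℕ) : Set ℕ := (fun a => a + m) '' A

/-- Leftward translation of a set of naturals: `A - m = {k | k + m ∈ A}`. -/
def lTrans (A : Set ℕ) (m : ℕ) : Set ℕ := {k : ℕ | k + m ∈ A}

/-- Translation invariance of a set function. -/
def TransInv (δ : Set ℕ → ℝ) : Prop :=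
  ∀ (A : Set ℕ) (m : ℕ), δ (rTrans A m) = δ A ∧ δ (lTrans A m) = δ A

/-- The upper asymptotic density: `limsup |A ∩ [1,n]| / n`. -/
noncomputable def upperDensity (A : Set ℕ) : ℝ :=
  Filter.limsup (fun n : ℕ =>
    (((Finset.Icc 1 n).filter (fun i => i ∈ A)).card : ℝ) / n) Filter.atTop

noncomputable def dcnt (A : Set ℕ) (n : ℕ) : ℕ :=
  ((Finset.Icc 1 n).filter (fun i => i ∈ A)).card

noncomputable def dfrac (A : Set ℕ) (n : ℕ) : ℝ := (dcnt A n : ℝ) / n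

lemma ud_eq (A : Set ℕ) : upperDensity A = limsup (dfrac A) atTop := rfl

lemma dcnt_le (A : Set ℕ) (n : ℕ) : dcnt A n ≤ n := by
  have := Finset.card_filter_le (Finset.Icc 1 n) (fun i => i ∈ A)
  simpa [dcnt, Nat.card_Icc] using this

lemma dcnt_zero (A : Set ℕ) : dcnt A 0 = 0 := by simp [dcnt]

lemma dfrac_nonneg (A : Set ℕ) (n : ℕ) : 0 ≤ dfrac A n := by
  unfold dfrac; positivity

lemma dfrac_le_one (A : Set ℕ) (n : ℕ) : dfrac A n ≤ 1 := by
  rcases Nat.eq_zero_or_pos n with h | h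
  · simp [dfrac, h, dcnt_zero]
  · rw [dfrac, div_le_one (by positivity)]
    exact_mod_cast dcnt_le A n

lemma dfrac_bddAbove (A : Set ℕ) : IsBoundedUnder (· ≤ ·) atTop (dfrac A) :=
  isBoundedUnder_of ⟨1, dfrac_le_one A⟩

lemma dfrac_bddBelow (A : Set ℕ) : IsBoundedUnder (· ≥ ·) atTop (dfrac A) :=
  isBoundedUnder_of ⟨0, dfrac_nonneg A⟩

lemma ud_nonneg (A : Set ℕ) : 0 ≤ upperDensity A := by
  rw [ud_eq]
  exact le_limsup_of_frequently_le
    ((Filter.Eventually.of_forall (dfrac_nonneg A)).frequently) (dfrac_bddAbove A)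

lemma ud_le_one (A : Set ℕ) : upperDensity A ≤ 1 := by
  rw [ud_eq]
  exact limsup_le_of_le (dfrac_bddBelow A).isCoboundedUnder_le
    (Filter.Eventually.of_forall (dfrac_le_one A))

lemma limsup_cdiv (C : ℝ) : limsup (fun n : ℕ => C / n) atTop = 0 :=
  (tendsto_const_div_atTop_nhds_zero_nat C).limsup_eq

/-- Core comparison lemma: counting within an additive constant gives `≤` of densities. -/
lemma ud_le_of_dcnt_le {A B : Set ℕ} (C : ℕ) (h : ∀ n, dcnt A n ≤ dcnt B n + C) :
    upperDensity A ≤ upperDensity B := by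
  have key : ∀ n, dfrac A n ≤ (dfrac B + fun n : ℕ => (C : ℝ) / n) n := by
    intro n
    rcases Nat.eq_zero_or_pos n with h0 | h0
    · simp [dfrac, h0, dcnt_zero]
    · have hn : (0 : ℝ) < n := by exact_mod_cast h0
      have : (dcnt A n : ℝ) ≤ (dcnt B n : ℝ) + C := by exact_mod_cast h n
      show dfrac A n ≤ dfrac B n + (C : ℝ) / n
      rw [dfrac, dfrac, ← add_div]
      exact div_le_div_of_nonneg_right this hn.le |>.trans_eq rfl
  have h1 : limsup (dfrac A) atTop ≤ limsup (dfrac B + fun n : ℕ => (C : ℝ) / n) atTop := by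
    refine limsup_le_limsup (Filter.Eventually.of_forall key)
      (dfrac_bddBelow A).isCoboundedUnder_le (isBoundedUnder_of ⟨1 + C, fun n => ?_⟩)
    have h2 : (C : ℝ) / n ≤ C := by
      rcases Nat.eq_zero_or_pos n with h0 | h0
      · simp [h0]
      · apply div_le_self (by positivity)
        exact_mod_cast h0
    exact add_le_add (dfrac_le_one B n) h2
  have h3 : limsup (dfrac B + fun n : ℕ => (C : ℝ) / n) atTop ≤
      limsup (dfrac B) atTop + limsup (fun n : ℕ => (C : ℝ) / n) atTop := by
    have hb : IsBoundedUnder (· ≥ ·) atTop (fun n : ℕ => (C : ℝ) / n) :=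
      isBoundedUnder_of ⟨0, fun n => by positivity⟩
    have ha : IsBoundedUnder (· ≤ ·) atTop (fun n : ℕ => (C : ℝ) / n) := by
      refine isBoundedUnder_of ⟨C, fun n => ?_⟩
      rcases Nat.eq_zero_or_pos n with h0 | h0
      · simp [h0]
      · apply div_le_self (by positivity); exact_mod_cast h0
    exact limsup_add_le (dfrac_bddBelow B) (dfrac_bddAbove B)
      hb.isCoboundedUnder_le ha
  rw [ud_eq, ud_eq]
  calc limsup (dfrac A) atTop ≤ _ := h1
    _ ≤ _ := h3
    _ = limsup (dfrac B) atTop := by rw [limsup_cdiv]; ring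

lemma ud_mono {A B : Set ℕ} (h : A ⊆ B) : upperDensity A ≤ upperDensity B := by
  refine ud_le_of_dcnt_le 0 fun n => ?_
  rw [add_zero]
  refine Finset.card_le_card fun i hi => ?_
  simp only [Finset.mem_filter] at hi ⊢
  exact ⟨hi.1, h hi.2⟩

lemma dcnt_union_le (A B : Set ℕ) (n : ℕ) : dcnt (A ∪ B) n ≤ dcnt A n + dcnt B n := by
  unfold dcnt
  refine (Finset.card_le_card ?_).trans (Finset.card_union_le _ _)
  intro i hi
  simp only [Finset.mem_filter, Finset.mem_union, Set.mem_union] at hi ⊢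
  tauto

lemma ud_union_le (A B : Set ℕ) :
    upperDensity (A ∪ B) ≤ upperDensity A + upperDensity B := by
  have key : ∀ n, dfrac (A ∪ B) n ≤ (dfrac A + dfrac B) n := by
    intro n
    show dfrac (A ∪ B) n ≤ dfrac A n + dfrac B n
    rw [dfrac, dfrac, dfrac, ← add_div]
    rcases Nat.eq_zero_or_pos n with h0 | h0
    · simp [h0, dcnt_zero]
    · refine div_le_div_of_nonneg_right ?_ (by exact_mod_cast h0 : (0:ℝ) < n).le
      exact_mod_cast dcnt_union_le A B n
  rw [ud_eq, ud_eq, ud_eq]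
  calc limsup (dfrac (A ∪ B)) atTop ≤ limsup (dfrac A + dfrac B) atTop := by
        refine limsup_le_limsup (Filter.Eventually.of_forall key)
          (dfrac_bddBelow _).isCoboundedUnder_le
          (isBoundedUnder_of ⟨2, fun n => ?_⟩)
        exact add_le_add (dfrac_le_one A n) (dfrac_le_one B n) |>.trans_eq one_add_one_eq_two
    _ ≤ _ := limsup_add_le (dfrac_bddBelow A) (dfrac_bddAbove A)
        (dfrac_bddBelow B).isCoboundedUnder_le (dfrac_bddAbove B)

lemma ud_univ : upperDensity (Set.univ : Set ℕ) = 1 := by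
  rw [ud_eq]
  have h : ∀ᶠ n : ℕ in atTop, dfrac Set.univ n = (fun _ : ℕ => (1:ℝ)) n := by
    filter_upwards [eventually_ge_atTop 1] with n hn
    have hn' : (0:ℝ) < n := by exact_mod_cast hn
    simp [dfrac, dcnt, Nat.card_Icc, div_self hn'.ne']
  rw [limsup_congr h]
  simp

lemma ud_finite {A : Set ℕ} (hA : A.Finite) : upperDensity A = 0 := by
  rw [ud_eq]
  have hC : ∀ n, dcnt A n ≤ hA.toFinset.card := by
    intro n
    refine Finset.card_le_card fun i hi => ?_
    simp only [dcnt, Finset.mem_filter] at hi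
    simpa using hi.2
  refine Filter.Tendsto.limsup_eq ?_
  refine tendsto_of_tendsto_of_tendsto_of_le_of_le tendsto_const_nhds
    (tendsto_const_div_atTop_nhds_zero_nat (hA.toFinset.card : ℝ))
    (fun n => dfrac_nonneg A n) (fun n => ?_)
  rcases Nat.eq_zero_or_pos n with h0 | h0
  · simp [dfrac, h0, dcnt_zero]
  · exact div_le_div_of_nonneg_right (by exact_mod_cast hC n)
      (by exact_mod_cast h0 : (0:ℝ) < n).le |>.trans_eq rfl

lemma dcnt_shift_le (A : Set ℕ) (n m : ℕ) : dcnt A (n + m) ≤ dcnt A n + m := by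
  unfold dcnt
  calc ((Finset.Icc 1 (n+m)).filter (fun i => i ∈ A)).card
      ≤ ((Finset.Icc 1 n).filter (fun i => i ∈ A) ∪ Finset.Icc (n+1) (n+m)).card := by
        refine Finset.card_le_card fun i hi => ?_
        simp only [Finset.mem_filter, Finset.mem_union, Finset.mem_Icc] at hi ⊢
        rcases le_or_gt i n with h | h
        · exact Or.inl ⟨⟨hi.1.1, h⟩, hi.2⟩
        · exact Or.inr ⟨h, hi.1.2⟩
    _ ≤ _ := by
        refine (Finset.card_union_le _ _).trans ?_
        have : (Finset.Icc (n+1) (n+m)).card = m := by simp [Nat.card_Icc]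
        omega

lemma dcnt_sub_le (A : Set ℕ) (n m : ℕ) : dcnt A n ≤ dcnt A (n - m) + m := by
  unfold dcnt
  calc ((Finset.Icc 1 n).filter (fun i => i ∈ A)).card
      ≤ ((Finset.Icc 1 (n-m)).filter (fun i => i ∈ A) ∪ Finset.Icc (n-m+1) n).card := by
        refine Finset.card_le_card fun i hi => ?_
        simp only [Finset.mem_filter, Finset.mem_union, Finset.mem_Icc] at hi ⊢
        rcases le_or_gt i (n - m) with h | h
        · exact Or.inl ⟨⟨hi.1.1, h⟩, hi.2⟩
        · exact Or.inr ⟨h, hi.1.2⟩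
    _ ≤ _ := by
        refine (Finset.card_union_le _ _).trans ?_
        have : (Finset.Icc (n-m+1) n).card = n - (n - m) := by simp [Nat.card_Icc]
        omega

lemma dcnt_rTrans_le (A : Set ℕ) (n m : ℕ) : dcnt (rTrans A m) n ≤ dcnt A n + 1 := by
  unfold dcnt
  calc ((Finset.Icc 1 n).filter (fun i => i ∈ rTrans A m)).card
      ≤ (insert 0 ((Finset.Icc 1 n).filter (fun i => i ∈ A))).card := by
        refine Finset.card_le_card_of_injOn (fun i => i - m) ?_ ?_
        · intro i hi
          simp only [Finset.mem_coe, Finset.mem_filter, Finset.mem_Icc, rTrans, Set.mem_image] at hi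
          obtain ⟨⟨h1, h2⟩, a, ha, hai⟩ := hi
          simp only [Finset.mem_coe, Finset.mem_insert, Finset.mem_filter, Finset.mem_Icc]
          rcases Nat.eq_zero_or_pos (i - m) with h0 | h0
          · exact Or.inl h0
          · refine Or.inr ⟨⟨h0, by omega⟩, ?_⟩
            have : i - m = a := by omega
            rwa [this]
        · intro i hi j hj hij
          simp only [Finset.coe_filter, Set.mem_setOf_eq, Finset.mem_Icc, rTrans,
            Set.mem_image] at hi hj
          obtain ⟨_, a, _, ha⟩ := hi
          obtain ⟨_, b, _, hb⟩ := hj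
          simp only at hij
          omega
    _ ≤ _ := by
        refine (Finset.card_insert_le _ _).trans ?_
        omega

lemma dcnt_le_rTrans (A : Set ℕ) (n m : ℕ) : dcnt A (n - m) ≤ dcnt (rTrans A m) n := by
  unfold dcnt
  refine Finset.card_le_card_of_injOn (fun a => a + m) ?_ ?_
  · intro a ha
    simp only [Finset.mem_coe, Finset.mem_filter, Finset.mem_Icc] at ha
    obtain ⟨⟨h1, h2⟩, hA⟩ := ha
    simp only [Finset.mem_coe, Finset.mem_filter, Finset.mem_Icc, rTrans, Set.mem_image]
    exact ⟨⟨by omega, by omega⟩, a, hA, rfl⟩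
  · intro a _ b _ h
    simp only at h
    omega

lemma dcnt_lTrans_le (A : Set ℕ) (n m : ℕ) : dcnt (lTrans A m) n ≤ dcnt A n + m := by
  refine le_trans ?_ (dcnt_shift_le A n m)
  unfold dcnt
  refine Finset.card_le_card_of_injOn (fun a => a + m) ?_ ?_
  · intro a ha
    simp only [Finset.mem_coe, Finset.mem_filter, Finset.mem_Icc, lTrans, Set.mem_setOf_eq] at ha
    simp only [Finset.mem_coe, Finset.mem_filter, Finset.mem_Icc]
    exact ⟨⟨by omega, by omega⟩, ha.2⟩
  · intro a _ b _ h
    simp only at h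
    omega

lemma dcnt_le_lTrans (A : Set ℕ) (n m : ℕ) : dcnt A n ≤ dcnt (lTrans A m) n + m := by
  unfold dcnt
  calc ((Finset.Icc 1 n).filter (fun i => i ∈ A)).card
      ≤ (((Finset.Icc 1 n).filter (fun i => i ∈ lTrans A m)).image (fun k => k + m)
          ∪ Finset.Icc 1 m).card := by
        refine Finset.card_le_card fun a ha => ?_
        simp only [Finset.mem_filter, Finset.mem_Icc] at ha
        obtain ⟨⟨h1, h2⟩, hA⟩ := ha
        simp only [Finset.mem_union, Finset.mem_image, Finset.mem_filter, Finset.mem_Icc,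
          lTrans, Set.mem_setOf_eq]
        rcases le_or_gt a m with h | h
        · exact Or.inr ⟨h1, h⟩
        · refine Or.inl ⟨a - m, ⟨⟨by omega, by omega⟩, ?_⟩, by omega⟩
          have : a - m + m = a := by omega
          rwa [this]
    _ ≤ _ := by
        refine (Finset.card_union_le _ _).trans ?_
        have h1 := Finset.card_image_le (s := (Finset.Icc 1 n).filter (fun i => i ∈ lTrans A m))
          (f := fun k => k + m)
        have h2 : (Finset.Icc 1 m).card = m := by simp
        omega

lemma ud_rTrans (A : Set ℕ) (m : ℕ) : upperDensity (rTrans A m) = upperDensity A := by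
  refine le_antisymm (ud_le_of_dcnt_le 1 fun n => dcnt_rTrans_le A n m) ?_
  refine ud_le_of_dcnt_le m fun n => ?_
  exact (dcnt_sub_le A n m).trans (by have := dcnt_le_rTrans A n m; omega)

lemma ud_lTrans (A : Set ℕ) (m : ℕ) : upperDensity (lTrans A m) = upperDensity A := by
  exact le_antisymm (ud_le_of_dcnt_le m fun n => dcnt_lTrans_le A n m)
    (ud_le_of_dcnt_le m fun n => dcnt_le_lTrans A n m)

lemma exists_ud_eq {α : ℝ} (h0 : 0 < α) (h1 : α ≤ 1) : ∃ A : Set ℕ, upperDensity A = α := by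
  set g : ℕ → ℤ := fun j => ⌊α * (j : ℝ)⌋ with hg
  set A : Set ℕ := {n : ℕ | g n ≠ g (n - 1)} with hA
  have floor_step : ∀ j : ℕ, g j ≤ g (j + 1) ∧ g (j + 1) ≤ g j + 1 := by
    intro j
    constructor
    · refine Int.floor_le_floor ?_
      have : ((j : ℝ)) ≤ ((j + 1 : ℕ) : ℝ) := by push_cast; linarith
      nlinarith
    · have h : α * ((j + 1 : ℕ) : ℝ) ≤ α * (j : ℝ) + 1 := by push_cast; nlinarith
      calc g (j + 1) ≤ ⌊α * (j : ℝ) + 1⌋ := Int.floor_le_floor h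
        _ = g j + 1 := by rw [Int.floor_add_one]
  have cnt_eq : ∀ n : ℕ, (dcnt A n : ℤ) = g n := by
    intro n
    have step1 : (dcnt A n : ℤ) = ∑ j ∈ Finset.range n, ((if (1 + j) ∈ A then 1 else 0) : ℤ) := by
      rw [dcnt, Finset.card_filter]
      push_cast
      rw [← Finset.Ico_add_one_right_eq_Icc, Finset.sum_Ico_eq_sum_range]
      simp
    rw [step1]
    have term_eq : ∀ j ∈ Finset.range n, ((if (1 + j) ∈ A then 1 else 0) : ℤ) =
        g (j + 1) - g j := by
      intro j _
      have hmem : (1 + j) ∈ A ↔ g (j + 1) ≠ g j := by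
        rw [hA, Set.mem_setOf_eq, show (1 + j : ℕ) - 1 = j from by omega,
          show (1 + j : ℕ) = j + 1 from by omega]
      obtain ⟨hl, hu⟩ := floor_step j
      split_ifs with h
      · have := hmem.1 h
        omega
      · have heq : g (j + 1) = g j := by
          by_contra hne
          exact h (hmem.2 hne)
        omega
    rw [Finset.sum_congr rfl term_eq, Finset.sum_range_sub g]
    have : g 0 = 0 := by simp [hg]
    omega
  refine ⟨A, ?_⟩
  rw [ud_eq]
  refine Filter.Tendsto.limsup_eq ?_
  have hlow : Tendsto (fun n : ℕ => α - 1 / n) atTop (nhds α) := by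
    have := tendsto_const_nhds (x := α) (f := atTop (α := ℕ)) |>.sub
      tendsto_one_div_atTop_nhds_zero_nat
    simpa using this
  refine tendsto_of_tendsto_of_tendsto_of_le_of_le' hlow tendsto_const_nhds ?_ ?_
  · filter_upwards [eventually_ge_atTop 1] with n hn
    have hn' : (0 : ℝ) < n := by exact_mod_cast hn
    have hd : (dcnt A n : ℝ) = ((g n : ℤ) : ℝ) := by exact_mod_cast cnt_eq n
    rw [dfrac, hd, le_div_iff₀ hn']
    have he : (α - 1 / n) * n = α * n - 1 := by field_simp
    rw [he]
    have := Int.sub_one_lt_floor (α * (n : ℝ))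
    calc α * n - 1 ≤ (⌊α * (n : ℝ)⌋ : ℝ) := by linarith
      _ = ((g n : ℤ) : ℝ) := by rw [hg]
  · filter_upwards [eventually_ge_atTop 1] with n hn
    have hn' : (0 : ℝ) < n := by exact_mod_cast hn
    have hd : (dcnt A n : ℝ) = ((g n : ℤ) : ℝ) := by exact_mod_cast cnt_eq n
    rw [dfrac, hd, div_le_iff₀ hn']
    have : ((g n : ℤ) : ℝ) ≤ α * n := by rw [hg]; exact Int.floor_le _
    linarith

theorem modified_upper_density_atomless_not_rich :
    IsUpperDensity (fun A : Set ℕ =>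
      if 0 < upperDensity A then (1 + upperDensity A) / 2 else 0) ∧
    TransInv (fun A : Set ℕ =>
      if 0 < upperDensity A then (1 + upperDensity A) / 2 else 0) ∧
    Set.range (fun A : Set ℕ =>
      if 0 < upperDensity A then (1 + upperDensity A) / 2 else 0) =
      {0} ∪ Set.Ioc (1/2 : ℝ) 1 := by
  have hnn : ∀ A : Set ℕ,
      0 ≤ (if 0 < upperDensity A then (1 + upperDensity A) / 2 else 0) := by
    intro A
    split_ifs with h
    · linarith
    · exact le_refl 0
  refine ⟨⟨?_, ?_, ?_, ?_, ?_⟩, ?_, ?_⟩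
  · intro A
    refine ⟨hnn A, ?_⟩
    beta_reduce
    split_ifs with h
    · have := ud_le_one A
      linarith
    · norm_num
  · beta_reduce
    rw [if_pos (by rw [ud_univ]; norm_num), ud_univ]
    norm_num
  · intro A hA
    beta_reduce
    rw [if_neg (by rw [ud_finite hA]; norm_num)]
  · intro A B hAB
    beta_reduce
    have hm := ud_mono hAB
    have hA0 := ud_nonneg A
    split_ifs with ha hb hb
    · linarith
    · linarith
    · linarith
    · exact le_refl 0
  · intro A B
    beta_reduce
    have hsub := ud_union_le A B
    have hA0 := ud_nonneg A
    have hB0 := ud_nonneg B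
    split_ifs with h1 h2 h3 h2 h3 h3
    all_goals try linarith
  · intro A m
    refine ⟨?_, ?_⟩ <;> beta_reduce
    · rw [ud_rTrans]
    · rw [ud_lTrans]
  · ext x
    simp only [Set.mem_range, Set.mem_union, Set.mem_singleton_iff, Set.mem_Ioc]
    constructor
    · rintro ⟨A, rfl⟩
      beta_reduce
      split_ifs with h
      · right
        have := ud_le_one A
        constructor <;> [linarith; linarith]
      · left; rfl
    · rintro (rfl | ⟨hx1, hx2⟩)
      · refine ⟨∅, ?_⟩
        beta_reduce
        rw [if_neg (by rw [ud_finite Set.finite_empty]; norm_num)]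
      · obtain ⟨A, hA⟩ := exists_ud_eq (α := 2 * x - 1) (by linarith) (by linarith)
        refine ⟨A, ?_⟩
        beta_reduce
        rw [if_pos (by rw [hA]; linarith), hA]
        ring
end

section
/- If I_f is the summable ideal determined by a non-increasing function f : ℕ → [0,∞) with divergent series, then I_f satisfies the diagonal intersection property: for every sequence ⟨B_n⟩ with B_n ∉ I_f and B_{n+1} \ B_n ∈ I_f for all n, there exists A ∉ I_f such that A \ B_n ∈ I_f for all n. -/
open scoped Classical
open Filter

/-- Membership in the summable ideal determined by `f`. -/
def MemSummableIdeal (f : ℕ → ℝ) (A : Set ℕ) : Prop :=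
  Summable fun a : A => f a

lemma memIdeal_iff (f : ℕ → ℝ) (A : Set ℕ) :
    MemSummableIdeal f A ↔ Summable (A.indicator f) :=
  summable_subtype_iff_indicator

lemma memIdeal_subset {f : ℕ → ℝ} (hpos : ∀ n, 0 ≤ f n) {A B : Set ℕ}
    (h : A ⊆ B) (hB : MemSummableIdeal f B) : MemSummableIdeal f A := by
  rw [memIdeal_iff] at *
  exact hB.of_nonneg_of_le (fun n => Set.indicator_nonneg (fun i _ => hpos i) n)
    (fun n => Set.indicator_le_indicator_of_subset h (fun i => hpos i) n)

lemma memIdeal_union {f : ℕ → ℝ} (hpos : ∀ n, 0 ≤ f n) {A B : Set ℕ}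
    (hA : MemSummableIdeal f A) (hB : MemSummableIdeal f B) :
    MemSummableIdeal f (A ∪ B) := by
  rw [memIdeal_iff] at *
  refine (hA.add hB).of_nonneg_of_le
    (fun n => Set.indicator_nonneg (fun i _ => hpos i) n) (fun n => ?_)
  by_cases h : n ∈ A ∪ B
  · rw [Set.indicator_of_mem h]
    rcases h with h | h
    · calc f n = A.indicator f n := (Set.indicator_of_mem h f).symm
        _ ≤ _ := le_add_of_nonneg_right (Set.indicator_nonneg (fun i _ => hpos i) n)
    · calc f n = B.indicator f n := (Set.indicator_of_mem h f).symm
        _ ≤ _ := le_add_of_nonneg_left (Set.indicator_nonneg (fun i _ => hpos i) n)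
  · rw [Set.indicator_of_notMem h]
    exact add_nonneg (Set.indicator_nonneg (fun i _ => hpos i) n)
      (Set.indicator_nonneg (fun i _ => hpos i) n)

lemma memIdeal_finite {f : ℕ → ℝ} {A : Set ℕ} (h : A.Finite) :
    MemSummableIdeal f A := by
  haveI := h.to_subtype
  exact Summable.of_finite

lemma exists_big_finset {f : ℕ → ℝ} (hpos : ∀ n, 0 ≤ f n) {C : Set ℕ}
    (hC : ¬ MemSummableIdeal f C) (r : ℝ) :
    ∃ F : Finset ℕ, ↑F ⊆ C ∧ r ≤ ∑ x ∈ F, f x := by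
  by_contra h
  push_neg at h
  apply hC
  rw [memIdeal_iff]
  refine summable_of_sum_le (c := r)
    (fun n => Set.indicator_nonneg (fun i _ => hpos i) n) (fun u => ?_)
  have heq : ∑ i ∈ u, C.indicator f i = ∑ i ∈ u.filter (· ∈ C), f i := by
    rw [Finset.sum_filter]
    exact Finset.sum_congr rfl fun i _ => by
      by_cases hi : i ∈ C <;> simp [Set.indicator, hi]
  rw [heq]
  refine le_of_lt (h _ ?_)
  intro x hx
  simpa using (Finset.mem_filter.mp hx).2

theorem summable_ideal_DIP
    (f : ℕ → ℝ) (hpos : ∀ n, 0 ≤ f n) (hmono : Antitone f)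
    (hdiv : ¬ Summable f)
    (B : ℕ → Set ℕ) (hB : ∀ n, ¬ MemSummableIdeal f (B n))
    (hdec : ∀ n, MemSummableIdeal f (B (n + 1) \ B n)) :
    ∃ A : Set ℕ, ¬ MemSummableIdeal f A ∧
      ∀ n, MemSummableIdeal f (A \ B n) := by
  -- the decreasing refinement of B
  set C : ℕ → Set ℕ := fun n => Nat.rec (B 0) (fun k Ck => Ck ∩ B (k + 1)) n with hCdef
  have hC0 : C 0 = B 0 := rfl
  have hCsucc : ∀ n, C (n + 1) = C n ∩ B (n + 1) := fun n => rfl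
  have hCB : ∀ n, C n ⊆ B n := by
    intro n
    cases n with
    | zero => exact subset_rfl
    | succ k => rw [hCsucc]; exact Set.inter_subset_right
  have hCmono : ∀ {m n : ℕ}, m ≤ n → C n ⊆ C m := by
    intro m n h
    induction h with
    | refl => exact subset_rfl
    | step _ ih => exact fun x hx => ih ((hCsucc _) ▸ hx).1
  have hdiff : ∀ n, MemSummableIdeal f (B n \ C n) := by
    intro n
    induction n with
    | zero =>
      have : B 0 \ C 0 = ∅ := by rw [hC0]; simp
      rw [this]; exact memIdeal_finite (Set.finite_empty)
    | succ k ih =>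
      refine memIdeal_subset hpos ?_ (memIdeal_union hpos (hdec k) ih)
      intro x hx
      rw [hCsucc] at hx
      have hxB : x ∈ B (k + 1) := hx.1
      have hxC : x ∉ C k := fun hc => hx.2 ⟨hc, hxB⟩
      by_cases hk : x ∈ B k
      · exact Or.inr ⟨hk, hxC⟩
      · exact Or.inl ⟨hxB, hk⟩
  have hCni : ∀ n, ¬ MemSummableIdeal f (C n) := by
    intro n hsum
    exact hB n (memIdeal_subset hpos
      (fun x hx => by by_cases h : x ∈ C n
                      · exact Or.inl h
                      · exact Or.inr ⟨hx, h⟩)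
      (memIdeal_union hpos hsum (hdiff n)))
  -- choose big finite chunks
  have hex : ∀ n : ℕ, ∃ F : Finset ℕ, ↑F ⊆ C n ∧ (n : ℝ) ≤ ∑ x ∈ F, f x :=
    fun n => exists_big_finset hpos (hCni n) n
  choose F hFC hFsum using hex
  refine ⟨⋃ n, (F n : Set ℕ), ?_, ?_⟩
  · intro hsum
    rw [memIdeal_iff] at hsum
    obtain ⟨n, hn⟩ := exists_nat_gt (∑' x, (⋃ n, (F n : Set ℕ)).indicator f x)
    have h1 : ∑ x ∈ F n, f x = ∑ x ∈ F n, (⋃ n, (F n : Set ℕ)).indicator f x := by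
      refine Finset.sum_congr rfl fun x hx => ?_
      rw [Set.indicator_of_mem (Set.mem_iUnion.mpr ⟨n, hx⟩)]
    have h2 := Summable.sum_le_tsum (F n)
      (fun i _ => Set.indicator_nonneg (fun j _ => hpos j) i) hsum
    have := hFsum n
    rw [h1] at this
    linarith
  · intro n
    refine memIdeal_subset hpos (B := ((Finset.range n).biUnion F : Finset ℕ)) ?_
      (memIdeal_finite (Finset.finite_toSet _))
    rintro x ⟨hxA, hxB⟩
    obtain ⟨k, hk⟩ := Set.mem_iUnion.mp hxA
    by_cases hkn : n ≤ k
    · exact absurd (hCB n (hCmono hkn (hFC k hk))) hxB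
    · push_neg at hkn
      simp only [Finset.coe_biUnion, Finset.mem_coe, Finset.mem_range, Set.mem_iUnion]
      exact ⟨k, hkn, hk⟩
end

section
/- The ideal rcp = {A ⊆ ℕ : ∑_{a∈A} 1/a < ∞} satisfies the diagonal intersection property: for every sequence ⟨B_n⟩ with B_n ∉ rcp and B_{n+1} \ B_n ∈ rcp for all n, there exists A ∉ rcp with A \ B_n ∈ rcp for all n. -/
open scoped Classical
open Filter

/-- Membership in the ideal `rcp` of sets whose series of reciprocals converge. -/
def MemRcp (A : Set ℕ) : Prop :=
  Summable fun a : A => (1 : ℝ) / a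

/-! ### Auxiliary machinery: an `ℝ≥0∞`-valued weight measuring the sum of reciprocals -/

open scoped ENNReal NNReal

/-- Reciprocal weight as an extended nonnegative real. -/
noncomputable def rF (n : ℕ) : ℝ≥0∞ := ((1 / (n : ℝ≥0) : ℝ≥0) : ℝ≥0∞)

lemma rF_ne_top (n : ℕ) : rF n ≠ ⊤ := ENNReal.coe_ne_top

/-- Total reciprocal weight of a set of naturals. -/
noncomputable def rS (A : Set ℕ) : ℝ≥0∞ := ∑' n, A.indicator rF n

lemma rS_eq (A : Set ℕ) : rS A = ∑' a : A, rF a := (tsum_subtype A rF).symm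

lemma memRcp_iff (A : Set ℕ) : MemRcp A ↔ rS A ≠ ⊤ := by
  have hfun : (fun a : A => (1 : ℝ) / a) =
      fun a : A => ((1 / ((a : ℕ) : ℝ≥0) : ℝ≥0) : ℝ) := by
    funext a; push_cast; ring
  rw [MemRcp, hfun, NNReal.summable_coe, ← ENNReal.tsum_coe_ne_top_iff_summable, rS_eq]
  rfl

lemma rS_mono {A B : Set ℕ} (h : A ⊆ B) : rS A ≤ rS B :=
  ENNReal.tsum_le_tsum fun n =>
    Set.indicator_le_indicator_of_subset h (fun _ => zero_le) n

lemma rS_union_disjoint {A B : Set ℕ} (h : Disjoint A B) : rS (A ∪ B) = rS A + rS B := by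
  unfold rS
  rw [Set.indicator_union_of_disjoint h]
  exact ENNReal.tsum_add

lemma rS_union_le (A B : Set ℕ) : rS (A ∪ B) ≤ rS A + rS B := by
  have h1 : A ∪ B = A ∪ (B \ A) := by rw [Set.union_diff_self]
  rw [h1, rS_union_disjoint Set.disjoint_sdiff_right]
  exact add_le_add le_rfl (rS_mono Set.diff_subset)

lemma rS_finite {S : Set ℕ} (h : S.Finite) : rS S ≠ ⊤ := by
  rw [rS_eq]
  haveI := h.fintype
  rw [tsum_fintype]
  refine (ENNReal.sum_lt_top.mpr ?_).ne
  exact fun a _ => (rF_ne_top _).lt_top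

lemma rS_iUnion_le (s : ℕ → Set ℕ) : rS (⋃ i, s i) ≤ ∑' i, rS (s i) := by
  have h : ∀ x, (⋃ i, s i).indicator rF x ≤ ∑' i, (s i).indicator rF x := by
    intro x
    by_cases hx : x ∈ ⋃ i, s i
    · obtain ⟨i, hi⟩ := Set.mem_iUnion.mp hx
      calc (⋃ i, s i).indicator rF x = rF x := Set.indicator_of_mem hx _
        _ = (s i).indicator rF x := (Set.indicator_of_mem hi _).symm
        _ ≤ _ := ENNReal.le_tsum i
    · simp [Set.indicator_of_notMem hx]
  calc rS (⋃ i, s i) ≤ ∑' x, ∑' i, (s i).indicator rF x := ENNReal.tsum_le_tsum h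
    _ = ∑' i, ∑' x, (s i).indicator rF x := ENNReal.tsum_comm
    _ = ∑' i, rS (s i) := rfl

lemma exists_rS_Iio {S : Set ℕ} {c : ℝ≥0∞} (hc : c < rS S) :
    ∃ M, c < rS (S ∩ Set.Iio M) := by
  rw [rS, ENNReal.tsum_eq_iSup_sum] at hc
  obtain ⟨t, ht⟩ := lt_iSup_iff.mp hc
  refine ⟨t.sup id + 1, ht.trans_le ?_⟩
  calc ∑ a ∈ t, S.indicator rF a
      ≤ ∑ a ∈ t, (S ∩ Set.Iio (t.sup id + 1)).indicator rF a := by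
        refine Finset.sum_le_sum fun a ha => ?_
        by_cases haS : a ∈ S
        · rw [Set.indicator_of_mem haS,
            Set.indicator_of_mem
              (show a ∈ S ∩ Set.Iio (t.sup id + 1) from
                ⟨haS, Nat.lt_succ_of_le (Finset.le_sup (f := id) ha)⟩)]
        · simp [Set.indicator_of_notMem haS]
    _ ≤ rS (S ∩ Set.Iio (t.sup id + 1)) := ENNReal.sum_le_tsum t

theorem rcp_ideal_DIP (B : ℕ → Set ℕ) (hB : ∀ n, ¬ MemRcp (B n))
    (hdec : ∀ n, MemRcp (B (n + 1) \ B n)) :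
    ∃ A : Set ℕ, ¬ MemRcp A ∧ ∀ n, MemRcp (A \ B n) := by
  set D : ℕ → Set ℕ := fun n => B (n + 1) \ B n with hD
  have hBσ : ∀ n, rS (B n) = ⊤ := fun n =>
    not_not.mp fun h => hB n ((memRcp_iff _).mpr h)
  have hDσ : ∀ n, rS (D n) ≠ ⊤ := fun n => (memRcp_iff _).mp (hdec n)
  -- key recursion step
  have key : ∀ n p : ℕ, ∃ M, p < M ∧ 1 ≤ rS (B n ∩ Set.Ico p M) ∧
      rS (D n ∩ Set.Ici M) ≤ 2⁻¹ ^ n := by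
    intro n p
    -- tail control
    obtain ⟨M₂, hM₂⟩ : ∃ M₂, rS (D n ∩ Set.Ici M₂) ≤ 2⁻¹ ^ n := by
      by_cases hle : rS (D n) ≤ 2⁻¹ ^ n
      · exact ⟨0, (rS_mono Set.inter_subset_left).trans hle⟩
      · push_neg at hle
        have hpos : ((2 : ℝ≥0∞)⁻¹) ^ n ≠ 0 :=
          pow_ne_zero n (ENNReal.inv_ne_zero.mpr ENNReal.ofNat_ne_top)
        have hne0 : rS (D n) ≠ 0 := fun h0 => by rw [h0] at hle; simp at hle
        have h1 : rS (D n) - 2⁻¹ ^ n < rS (D n) :=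
          ENNReal.sub_lt_self (hDσ n) hne0 hpos
        obtain ⟨M₂, hM₂⟩ := exists_rS_Iio h1
        refine ⟨M₂, ?_⟩
        have hcover : (D n ∩ Set.Iio M₂) ∪ (D n ∩ Set.Ici M₂) = D n := by
          rw [← Set.inter_union_distrib_left, Set.Iio_union_Ici, Set.inter_univ]
        have hdisj : Disjoint (D n ∩ Set.Iio M₂) (D n ∩ Set.Ici M₂) := by
          rw [Set.disjoint_left]
          rintro x ⟨-, h1⟩ ⟨-, h2⟩
          simp only [Set.mem_Iio] at h1
          simp only [Set.mem_Ici] at h2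
          omega
        have hsplit : rS (D n ∩ Set.Iio M₂) + rS (D n ∩ Set.Ici M₂) = rS (D n) := by
          rw [← rS_union_disjoint hdisj, hcover]
        have hfin : rS (D n ∩ Set.Iio M₂) ≠ ⊤ :=
          fun h => hDσ n (top_le_iff.mp (h ▸ rS_mono Set.inter_subset_left))
        have hle2 : rS (D n) ≤ rS (D n ∩ Set.Iio M₂) + 2⁻¹ ^ n :=
          tsub_le_iff_right.mp hM₂.le
        rw [← hsplit] at hle2
        exact (ENNReal.add_le_add_iff_left hfin).mp hle2
    -- main divergent part
    have hmain : (1 : ℝ≥0∞) < rS (B n ∩ Set.Ici p) := by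
      have htop : rS (B n ∩ Set.Ici p) = ⊤ := by
        by_contra h
        have hsub : B n ⊆ (B n ∩ Set.Iio p) ∪ (B n ∩ Set.Ici p) := by
          intro x hx
          rcases lt_or_ge x p with hxp | hxp
          · exact Or.inl ⟨hx, hxp⟩
          · exact Or.inr ⟨hx, hxp⟩
        have hfin1 : rS (B n ∩ Set.Iio p) ≠ ⊤ :=
          rS_finite ((Set.finite_Iio p).subset Set.inter_subset_right)
        have := (rS_mono hsub).trans (rS_union_le _ _)
        rw [hBσ n] at this
        exact (ENNReal.add_ne_top.mpr ⟨hfin1, h⟩) (top_le_iff.mp this)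
      rw [htop]; exact ENNReal.one_lt_top
    obtain ⟨M₁, hM₁⟩ := exists_rS_Iio hmain
    refine ⟨max (max M₁ M₂) (p + 1),
      Nat.lt_of_lt_of_le (Nat.lt_succ_self p) (le_max_right _ _), ?_, ?_⟩
    · refine hM₁.le.trans (rS_mono ?_)
      rintro x ⟨⟨hxB, hxp⟩, hxM⟩
      exact ⟨hxB, hxp, lt_of_lt_of_le hxM ((le_max_left _ _).trans (le_max_left _ _))⟩
    · refine (rS_mono ?_).trans hM₂
      rintro x ⟨h1, h2⟩
      exact ⟨h1, le_trans ((le_max_right M₁ M₂).trans (le_max_left _ _)) h2⟩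
  obtain ⟨M, hM⟩ : ∃ M : ℕ → ℕ → ℕ, ∀ n p, p < M n p ∧
      1 ≤ rS (B n ∩ Set.Ico p (M n p)) ∧ rS (D n ∩ Set.Ici (M n p)) ≤ 2⁻¹ ^ n :=
    ⟨fun n p => (key n p).choose, fun n p => (key n p).choose_spec⟩
  set m : ℕ → ℕ := fun n => Nat.rec 0 (fun k mk => M k mk) n with hmdef
  have hm1 : ∀ n, m (n + 1) = M n (m n) := fun _ => rfl
  have hmlt : ∀ n, m n < m (n + 1) := fun n => by rw [hm1]; exact (hM n (m n)).1
  have hmono : StrictMono m := strictMono_nat_of_lt_succ hmlt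
  set P : ℕ → Set ℕ := fun n => B n ∩ Set.Ico (m n) (m (n + 1)) with hPdef
  have hP1 : ∀ n, 1 ≤ rS (P n) := by
    intro n
    have := (hM n (m n)).2.1
    rwa [← hm1] at this
  have hDtail : ∀ n, rS (D n ∩ Set.Ici (m (n + 1))) ≤ 2⁻¹ ^ n := by
    intro n
    have := (hM n (m n)).2.2
    rwa [← hm1] at this
  refine ⟨⋃ k, P k, ?_, ?_⟩
  · -- the union is not in rcp
    rw [memRcp_iff, not_ne_iff]
    by_contra hne
    obtain ⟨N, hN⟩ := ENNReal.exists_nat_gt hne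
    have hpt : ∀ x, ∑ n ∈ Finset.range N, (P n).indicator rF x ≤
        (⋃ k, P k).indicator rF x := by
      intro x
      by_cases hx : ∃ k ∈ Finset.range N, x ∈ P k
      · obtain ⟨k, hkN, hk⟩ := hx
        have hside : ∀ j ∈ Finset.range N, j ≠ k → (P j).indicator rF x = 0 := by
          intro j _ hjk
          refine Set.indicator_of_notMem (fun hxj => ?_) _
          obtain ⟨-, hk1, hk2⟩ := hk
          obtain ⟨-, hj1, hj2⟩ := hxj
          rcases lt_or_gt_of_ne hjk with h | h
          · have := hmono.monotone (show j + 1 ≤ k from h)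
            omega
          · have := hmono.monotone (show k + 1 ≤ j from h)
            omega
        rw [Finset.sum_eq_single_of_mem k hkN hside, Set.indicator_of_mem hk,
          Set.indicator_of_mem (Set.mem_iUnion.mpr ⟨k, hk⟩)]
      · push_neg at hx
        rw [Finset.sum_eq_zero fun j hj => Set.indicator_of_notMem (hx j hj) _]
        exact zero_le
    have hle : (N : ℝ≥0∞) ≤ rS (⋃ k, P k) := by
      calc (N : ℝ≥0∞) = ∑ _n ∈ Finset.range N, (1 : ℝ≥0∞) := by simp
        _ ≤ ∑ n ∈ Finset.range N, rS (P n) := Finset.sum_le_sum fun n _ => hP1 n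
        _ = ∑' x, ∑ n ∈ Finset.range N, (P n).indicator rF x :=
            (Summable.tsum_finsetSum fun i _ => ENNReal.summable).symm
        _ ≤ rS (⋃ k, P k) := ENNReal.tsum_le_tsum hpt
    exact absurd hle (not_le.mpr hN)
  · -- all the differences are in rcp
    intro n
    rw [memRcp_iff]
    have hsub : (⋃ k, P k) \ B n ⊆
        Set.Iio (m (n + 1)) ∪ ⋃ j : ℕ, (D (n + j) ∩ Set.Ici (m (n + j + 1))) := by
      rintro x ⟨hxA, hxB⟩
      obtain ⟨k, hk⟩ := Set.mem_iUnion.mp hxA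
      obtain ⟨hxBk, hxlo, hxhi⟩ := hk
      by_cases hxm : x < m (n + 1)
      · exact Or.inl hxm
      · right
        push_neg at hxm
        have hnk : n < k := by
          by_contra h
          push_neg at h
          have := hmono.monotone (show k + 1 ≤ n + 1 by omega)
          omega
        have hexists : ∃ j, n ≤ j ∧ j < k ∧ x ∈ B (j + 1) ∧ x ∉ B j := by
          have hQ : ∃ j, x ∈ B (n + 1 + j) :=
            ⟨k - (n + 1), by rw [show n + 1 + (k - (n + 1)) = k by omega]; exact hxBk⟩
          set j0 := Nat.find hQ with hj0def
          have hj0 : x ∈ B (n + 1 + j0) := Nat.find_spec hQ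
          have hj0le : j0 ≤ k - (n + 1) := Nat.find_min' hQ (by
            rw [show n + 1 + (k - (n + 1)) = k by omega]; exact hxBk)
          refine ⟨n + j0, Nat.le_add_right _ _, by omega,
            by rw [show n + j0 + 1 = n + 1 + j0 by omega]; exact hj0, ?_⟩
          rcases Nat.eq_zero_or_pos j0 with h0 | h0
          · rw [h0, Nat.add_zero]; exact hxB
          · intro hmem
            exact Nat.find_min hQ (show j0 - 1 < j0 by omega)
              (by rw [show n + 1 + (j0 - 1) = n + j0 by omega]; exact hmem)
        obtain ⟨j, hnj, hjk, hj1, hj2⟩ := hexists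
        refine Set.mem_iUnion.mpr ⟨j - n, ?_, ?_⟩
        · show x ∈ D (n + (j - n))
          rw [show n + (j - n) = j by omega]
          exact ⟨hj1, hj2⟩
        · show m (n + (j - n) + 1) ≤ x
          rw [show n + (j - n) + 1 = j + 1 by omega]
          exact le_trans (hmono.monotone (show j + 1 ≤ k by omega)) hxlo
    have hbound : rS ((⋃ k, P k) \ B n) ≤
        rS (Set.Iio (m (n + 1))) + ∑' j : ℕ, rS (D (n + j) ∩ Set.Ici (m (n + j + 1))) :=
      (rS_mono hsub).trans ((rS_union_le _ _).trans
        (add_le_add_right (rS_iUnion_le _) (rS (Set.Iio (m (n + 1))))))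
    have h2 : ∑' j : ℕ, rS (D (n + j) ∩ Set.Ici (m (n + j + 1))) ≤
        ∑' j : ℕ, (2 : ℝ≥0∞)⁻¹ ^ j := by
      refine ENNReal.tsum_le_tsum fun j => (hDtail (n + j)).trans ?_
      exact pow_le_pow_of_le_one zero_le
        (ENNReal.inv_le_one.mpr (by norm_num)) (Nat.le_add_left j n)
    have hgeo : ∑' j : ℕ, (2 : ℝ≥0∞)⁻¹ ^ j ≠ ⊤ := by
      rw [ENNReal.tsum_geometric]
      refine ENNReal.inv_ne_top.mpr fun h0 => ?_
      have h1 : (1 : ℝ≥0∞) ≤ 2⁻¹ := tsub_eq_zero_iff_le.mp h0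
      exact absurd h1 (not_le.mpr (ENNReal.inv_lt_one.mpr (by norm_num)))
    intro htop
    have := hbound.trans (add_le_add_right h2 (rS (Set.Iio (m (n + 1)))))
    rw [htop, top_le_iff] at this
    exact ENNReal.add_ne_top.mpr ⟨rS_finite (Set.finite_Iio _), hgeo⟩ this
end

section
/- If δ is an atomless abstract upper density on ℕ, then the ideal Z_δ of its zero sets does not satisfy the diagonal intersection property. -/
open scoped Classical
open Filter

/-- `δ` is atomless: every set of positive density has a subset of strictly
smaller positive density. -/
def Atomless (δ : Set ℕ → ℝ) : Prop :=
  ∀ A : Set ℕ, 0 < δ A → ∃ B : Set ℕ, B ⊂ A ∧ 0 < δ B ∧ δ B < δ A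

/-- The diagonal intersection property of a family `I` of subsets of `ℕ`. -/
def DIP (I : Set (Set ℕ)) : Prop :=
  ∀ B : ℕ → Set ℕ, (∀ n, B n ∉ I) → (∀ n, B (n + 1) \ B n ∈ I) →
    ∃ A : Set ℕ, A ∉ I ∧ ∀ n, A \ B n ∈ I

theorem atomless_zero_sets_fail_DIP (δ : Set ℕ → ℝ)
    (hδ : IsUpperDensity δ) (hat : Atomless δ) :
    ¬ DIP {A : Set ℕ | δ A = 0} := by
  obtain ⟨hbd, huniv, hfin, hmono, hsub⟩ := hδ
  intro hdip
  -- the infimum of densities of positive-density subsets of `S`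
  set c : Set ℕ → ℝ := fun S => sInf {x | ∃ C, C ⊆ S ∧ 0 < δ C ∧ δ C = x} with hc
  have key : ∀ (S : Set ℕ) (ε : ℝ), 0 < δ S → 0 < ε →
      ∃ T, T ⊆ S ∧ 0 < δ T ∧ δ T < c S + ε := by
    intro S ε hS hε
    have hne : {x | ∃ C, C ⊆ S ∧ 0 < δ C ∧ δ C = x}.Nonempty :=
      ⟨δ S, S, subset_rfl, hS, rfl⟩
    obtain ⟨a, ⟨C, hCS, hC, rfl⟩, ha⟩ := Real.lt_sInf_add_pos hne hε
    exact ⟨C, hCS, hC, ha⟩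
  have hbdd : ∀ S : Set ℕ, BddBelow {x | ∃ C, C ⊆ S ∧ 0 < δ C ∧ δ C = x} := by
    intro S
    exact ⟨0, by rintro x ⟨C, -, -, rfl⟩; exact (hbd C).1⟩
  -- construct the decreasing sequence
  have h0 : 0 < δ Set.univ := by rw [huniv]; norm_num
  let F : ℕ → {S : Set ℕ // 0 < δ S} → {S : Set ℕ // 0 < δ S} := fun n S =>
    ⟨(key S.1 (1 / (n + 1)) S.2 (by positivity)).choose,
     (key S.1 (1 / (n + 1)) S.2 (by positivity)).choose_spec.2.1⟩
  let B' : ℕ → {S : Set ℕ // 0 < δ S} := fun n => Nat.rec ⟨Set.univ, h0⟩ F n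
  let B : ℕ → Set ℕ := fun n => (B' n).1
  have hBpos : ∀ n, 0 < δ (B n) := fun n => (B' n).2
  have hBspec : ∀ n, B (n + 1) ⊆ B n ∧ δ (B (n + 1)) < c (B n) + 1 / (n + 1) := by
    intro n
    have h := (key (B' n).1 (1 / (n + 1)) (B' n).2 (by positivity)).choose_spec
    exact ⟨h.1, h.2.2⟩
  -- apply DIP
  obtain ⟨A, hA, hAB⟩ := hdip B
    (fun n => by simpa using (hBpos n).ne')
    (fun n => by
      have : B (n + 1) \ B n = ∅ := Set.diff_eq_empty.mpr (hBspec n).1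
      simp only [Set.mem_setOf_eq, this]
      exact hfin ∅ Set.finite_empty)
  simp only [Set.mem_setOf_eq] at hA hAB
  have hApos : 0 < δ A := lt_of_le_of_ne (hbd A).1 (Ne.symm hA)
  obtain ⟨A', hA'sub, hA'pos, hA'lt⟩ := hat A hApos
  have hA'A : A' ⊆ A := hA'sub.subset
  -- c (B n) ≤ δ A' for every n
  have hcA' : ∀ n, c (B n) ≤ δ A' := by
    intro n
    have hdiff0 : δ (A' \ B n) = 0 := by
      have h1 : δ (A' \ B n) ≤ δ (A \ B n) :=
        hmono _ _ (Set.diff_subset_diff_left hA'A)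
      have := (hbd (A' \ B n)).1
      linarith [hAB n]
    have hint : 0 < δ (A' ∩ B n) := by
      have hu : δ A' ≤ δ (A' ∩ B n) + δ (A' \ B n) := by
        calc δ A' = δ ((A' ∩ B n) ∪ (A' \ B n)) := by rw [Set.inter_union_diff]
        _ ≤ δ (A' ∩ B n) + δ (A' \ B n) := hsub _ _
      linarith
    have hmem : δ (A' ∩ B n) ∈ {x | ∃ C, C ⊆ B n ∧ 0 < δ C ∧ δ C = x} :=
      ⟨A' ∩ B n, Set.inter_subset_right, hint, rfl⟩
    calc c (B n) ≤ δ (A' ∩ B n) := csInf_le (hbdd _) hmem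
    _ ≤ δ A' := hmono _ _ Set.inter_subset_left
  -- δ A ≤ δ A' + 1/(n+1) for every n
  have hkey : ∀ n : ℕ, δ A ≤ δ A' + 1 / (n + 1) := by
    intro n
    have h1 : δ A ≤ δ (B (n + 1)) := by
      calc δ A ≤ δ ((A \ B (n + 1)) ∪ B (n + 1)) :=
            hmono _ _ (by intro x hx; by_cases h : x ∈ B (n + 1) <;> simp [h, hx])
      _ ≤ δ (A \ B (n + 1)) + δ (B (n + 1)) := hsub _ _
      _ = δ (B (n + 1)) := by rw [hAB (n + 1)]; ring
    have h2 := (hBspec n).2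
    have h3 := hcA' n
    linarith
  have hle : δ A ≤ δ A' := by
    refine le_of_forall_pos_le_add fun ε hε => ?_
    obtain ⟨n, hn⟩ := exists_nat_one_div_lt hε
    have := hkey n
    linarith
  linarith
end

section
/- If δ is an atomless abstract upper density, then there exists a decreasing sequence ⟨B_n⟩ of sets with δ(B_n) > 0 such that every A ⊆ ℕ with δ(A \ B_n) = 0 for all n satisfies δ(A) = 0. -/
open scoped Classical
open Filter

theorem atomless_decreasing_sequence (δ : Set ℕ → ℝ)
    (hδ : IsUpperDensity δ) (hat : Atomless δ) :
    ∃ B : ℕ → Set ℕ, (∀ n, B (n + 1) ⊆ B n) ∧ (∀ n, 0 < δ (B n)) ∧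
      ∀ A : Set ℕ, (∀ n, δ (A \ B n) = 0) → δ A = 0 := by
  obtain ⟨hb, hu, hfin, hmono, hsub⟩ := hδ
  set S : Set ℕ → Set ℝ := fun B => {x | ∃ C : Set ℕ, C ⊆ B ∧ δ C = x ∧ 0 < x} with hS
  have hbdd : ∀ B, BddBelow (S B) := by
    intro B
    refine ⟨0, ?_⟩
    rintro x ⟨C, -, -, hp⟩
    exact le_of_lt hp
  have step : ∀ (n : ℕ) (B : Set ℕ), 0 < δ B →
      ∃ C : Set ℕ, C ⊆ B ∧ 0 < δ C ∧ δ C < sInf (S B) + (1/2)^n := by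
    intro n B hB
    have hne : (S B).Nonempty := ⟨δ B, B, subset_rfl, rfl, hB⟩
    have hlt : sInf (S B) < sInf (S B) + (1/2)^n :=
      lt_add_of_pos_right _ (by positivity)
    obtain ⟨x, ⟨C, hCB, hCx, hxpos⟩, hxlt⟩ := exists_lt_of_csInf_lt hne hlt
    exact ⟨C, hCB, hCx ▸ hxpos, hCx ▸ hxlt⟩
  choose! F hF1 hF2 hF3 using step
  let f : ℕ → Set ℕ := fun n => Nat.rec Set.univ (fun n Bn => F n Bn) n
  have hf0 : ∀ n, 0 < δ (f n) := by
    intro n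
    induction n with
    | zero => show (0:ℝ) < δ Set.univ; rw [hu]; exact one_pos
    | succ n ih => exact hF2 n (f n) ih
  have hfs : ∀ n, f (n + 1) ⊆ f n := fun n => hF1 n (f n) (hf0 n)
  refine ⟨f, hfs, hf0, ?_⟩
  intro A hA
  by_contra hA0
  have hApos : 0 < δ A := lt_of_le_of_ne (hb A).1 (Ne.symm hA0)
  obtain ⟨D, hDA, hDpos, hDlt⟩ := hat A hApos
  have key : ∀ (X : Set ℕ), 0 < δ X → (∀ n, δ (X \ f n) = 0) → ∀ n : ℕ,
      sInf (S (f n)) ≤ δ X ∧ δ X < sInf (S (f n)) + (1/2)^n := by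
    intro X hX hX0 n
    have h1 : δ X ≤ δ (X ∩ f (n + 1)) := by
      calc δ X ≤ δ ((X ∩ f (n + 1)) ∪ (X \ f (n + 1))) := by
            apply hmono
            intro x hx
            by_cases h : x ∈ f (n + 1) <;> simp [hx, h]
        _ ≤ δ (X ∩ f (n + 1)) + δ (X \ f (n + 1)) := hsub _ _
        _ = δ (X ∩ f (n + 1)) := by rw [hX0 (n + 1)]; ring
    have h2 : δ (X ∩ f (n + 1)) = δ X :=
      le_antisymm (hmono _ _ Set.inter_subset_left) h1
    constructor
    · apply csInf_le (hbdd _)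
      exact ⟨X ∩ f (n + 1), Set.inter_subset_right.trans (hfs n), h2, h2 ▸ hX⟩
    · calc δ X ≤ δ (f (n + 1)) := h1.trans (hmono _ _ Set.inter_subset_right)
        _ < sInf (S (f n)) + (1/2)^n := hF3 n (f n) (hf0 n)
  have hD0 : ∀ n, δ (D \ f n) = 0 := by
    intro n
    refine le_antisymm ?_ (hb _).1
    rw [← hA n]
    exact hmono _ _ (Set.diff_subset_diff_left hDA.subset)
  obtain ⟨n, hn⟩ : ∃ n : ℕ, (1/2:ℝ)^n < δ A - δ D :=
    exists_pow_lt_of_lt_one (by linarith) (by norm_num)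
  have k1 := key A hApos hA n
  have k2 := key D hDpos hD0 n
  linarith [k1.1, k1.2, k2.1, k2.2]
end

section
/- There is no atomless abstract upper density δ whose family of zero sets equals the ideal of finite sets, i.e., satisfying δ(A) = 0 iff A is finite. -/
open scoped Classical
open Filter

theorem no_atomless_density_for_fin :
    ¬ ∃ δ : Set ℕ → ℝ, IsUpperDensity δ ∧ Atomless δ ∧
      ∀ A : Set ℕ, δ A = 0 ↔ A.Finite := by
  rintro ⟨δ, ⟨h01, huniv, hfin, hmono, hsub⟩, hat, hiff⟩
  -- δ is positive on infinite sets
  have hpos : ∀ S : Set ℕ, S.Infinite → 0 < δ S := by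
    intro S hS
    rcases lt_or_eq_of_le (h01 S).1 with h | h
    · exact h
    · exact absurd ((hiff S).mp h.symm) hS
  set F : Set ℕ → Set ℝ := fun S => δ '' {C | C ⊆ S ∧ C.Infinite} with hF
  set f : Set ℕ → ℝ := fun S => sInf (F S) with hf
  have hFne : ∀ S : Set ℕ, S.Infinite → (F S).Nonempty :=
    fun S hS => ⟨δ S, S, ⟨subset_rfl, hS⟩, rfl⟩
  have hFbdd : ∀ S : Set ℕ, BddBelow (F S) := by
    intro S
    exact ⟨0, by rintro x ⟨C, hC, rfl⟩; exact (h01 C).1⟩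
  -- choice of next set in the chain
  have hstep : ∀ (S : Set ℕ) (n : ℕ), ∃ C : Set ℕ,
      S.Infinite → C ⊆ S ∧ C.Infinite ∧ δ C < f S + 1 / (n + 1) := by
    intro S n
    by_cases hS : S.Infinite
    · have hε : (0 : ℝ) < 1 / (n + 1) := by positivity
      obtain ⟨x, ⟨C, ⟨hCS, hCi⟩, rfl⟩, hx⟩ := Real.lt_sInf_add_pos (hFne S hS) hε
      exact ⟨C, fun _ => ⟨hCS, hCi, hx⟩⟩
    · exact ⟨S, fun h => absurd h hS⟩
  choose g hg using hstep
  set A : ℕ → Set ℕ := fun n => Nat.rec Set.univ (fun n S => g S n) n with hA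
  have hAinf : ∀ n, (A n).Infinite := by
    intro n
    induction n with
    | zero => exact Set.infinite_univ
    | succ n ih => exact (hg (A n) n ih).2.1
  have hAsub : ∀ n, A (n + 1) ⊆ A n := fun n => (hg (A n) n (hAinf n)).1
  have hAlt : ∀ n, δ (A (n + 1)) < f (A n) + 1 / (n + 1) :=
    fun n => (hg (A n) n (hAinf n)).2.2
  have hchain : ∀ m n, n ≤ m → A m ⊆ A n := by
    intro m
    induction m with
    | zero => intro n hn; simp [Nat.le_zero.mp hn]
    | succ m ih =>
      intro n hn
      rcases Nat.lt_or_ge n (m + 1) with h | h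
      · exact (hAsub m).trans (ih n (Nat.lt_succ_iff.mp h))
      · have : n = m + 1 := le_antisymm hn h
        simp [this]
  -- the diagonal sequence
  have hpick : ∀ (S : Set ℕ) (k : ℕ), ∃ m : ℕ, S.Infinite → m ∈ S ∧ k < m := by
    intro S k
    by_cases hS : S.Infinite
    · obtain ⟨m, hm, hkm⟩ := hS.exists_gt k
      exact ⟨m, fun _ => ⟨hm, hkm⟩⟩
    · exact ⟨0, fun h => absurd h hS⟩
  choose u hu using hpick
  set b : ℕ → ℕ := fun n => Nat.rec (u (A 0) 0) (fun n x => u (A (n + 1)) x) n with hb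
  have hbmem : ∀ n, b n ∈ A n := by
    intro n
    cases n with
    | zero => exact (hu (A 0) 0 (hAinf 0)).1
    | succ n => exact (hu (A (n + 1)) (b n) (hAinf (n + 1))).1
  have hblt : ∀ n, b n < b (n + 1) := fun n => (hu (A (n + 1)) (b n) (hAinf (n + 1))).2
  have hbmono : StrictMono b := strictMono_nat_of_lt_succ hblt
  set B : Set ℕ := Set.range b with hBdef
  have hBinf : B.Infinite := Set.infinite_range_of_injective hbmono.injective
  have hdiff : ∀ n, (B \ A n).Finite := by
    intro n
    apply Set.Finite.subset ((Set.finite_Iio n).image b)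
    rintro x ⟨⟨m, rfl⟩, hx⟩
    refine ⟨m, ?_, rfl⟩
    by_contra h
    exact hx (hchain m n (le_of_not_gt h) (hbmem m))
  -- every infinite subset of B has density at least f (A n)
  have hlow : ∀ (n : ℕ) (C : Set ℕ), C ⊆ B → C.Infinite → f (A n) ≤ δ C := by
    intro n C hCB hCi
    have h1 : (C ∩ A n).Infinite := by
      refine Set.Infinite.mono ?_ (hCi.diff (hdiff n))
      intro x hx
      rcases hx with ⟨hxC, hxn⟩
      by_cases h : x ∈ A n
      · exact ⟨hxC, h⟩
      · exact absurd ⟨hCB hxC, h⟩ hxn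
    have h2 : f (A n) ≤ δ (C ∩ A n) :=
      csInf_le (hFbdd (A n)) ⟨C ∩ A n, ⟨Set.inter_subset_right, h1⟩, rfl⟩
    exact h2.trans (hmono _ _ Set.inter_subset_left)
  -- B itself has density less than f (A n) + 1/(n+1)
  have hup : ∀ n : ℕ, δ B < f (A n) + 1 / (n + 1) := by
    intro n
    have h1 : δ B ≤ δ (B ∩ A (n + 1)) + δ (B \ A (n + 1)) := by
      refine le_trans (hmono _ _ ?_) (hsub _ _)
      intro x hx
      by_cases h : x ∈ A (n + 1)
      · exact Or.inl ⟨hx, h⟩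
      · exact Or.inr ⟨hx, h⟩
    rw [hfin _ (hdiff (n + 1)), add_zero] at h1
    calc δ B ≤ δ (B ∩ A (n + 1)) := h1
      _ ≤ δ (A (n + 1)) := hmono _ _ Set.inter_subset_right
      _ < f (A n) + 1 / (n + 1) := hAlt n
  -- contradiction with atomlessness
  obtain ⟨D, hDB, hDpos, hDlt⟩ := hat B (hpos B hBinf)
  have hDinf : D.Infinite := by
    intro hDfin
    exact absurd ((hiff D).mpr hDfin) (ne_of_gt hDpos)
  have key : δ B ≤ δ D := by
    refine le_of_forall_pos_lt_add fun ε hε => ?_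
    obtain ⟨n, hn⟩ := exists_nat_one_div_lt hε
    calc δ B < f (A n) + 1 / (n + 1) := hup n
      _ ≤ δ D + 1 / (n + 1) := by
          have := hlow n D hDB.subset hDinf
          linarith
      _ < δ D + ε := by linarith
  exact absurd hDlt (not_lt.mpr key)
end

section
/- There is no atomless abstract upper density δ satisfying δ(A) = 0 if and only if ∑_{a∈A} 1/a < ∞. -/
open scoped Classical
open Filter

theorem no_atomless_density_for_rcp :
    ¬ ∃ δ : Set ℕ → ℝ, IsUpperDensity δ ∧ Atomless δ ∧
      ∀ A : Set ℕ, δ A = 0 ↔ Summable (fun a : A => (1 : ℝ) / a) := by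
  rintro ⟨δ, ⟨hbdd, huniv, hfin, hmono, hsub⟩, hatom, hiff⟩
  classical
  set f : ℕ → ℝ := fun a => (1 : ℝ) / a with hf
  have hf0 : ∀ a, 0 ≤ f a := fun a => by positivity
  -- reformulate the summability condition via indicators
  have hiff' : ∀ A : Set ℕ, δ A = 0 ↔ Summable (A.indicator f) := by
    intro A
    rw [hiff A, ← summable_subtype_iff_indicator (f := f) (s := A)]
    rfl
  -- from positive density, finite subsets with arbitrarily large reciprocal sums
  have hbig : ∀ A : Set ℕ, δ A ≠ 0 → ∀ r : ℝ,
      ∃ G : Finset ℕ, ↑G ⊆ A ∧ r ≤ ∑ a ∈ G, f a := by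
    intro A hA r
    have hns : ¬ Summable (A.indicator f) := fun h => hA ((hiff' A).2 h)
    have hten : Tendsto (fun n => ∑ i ∈ Finset.range n, A.indicator f i) atTop atTop := by
      by_contra h
      exact hns ((summable_iff_not_tendsto_nat_atTop_of_nonneg
        (fun n => Set.indicator_nonneg (fun a _ => hf0 a) n)).2 h)
    obtain ⟨n, hn⟩ := (hten.eventually_ge_atTop r).exists
    refine ⟨(Finset.range n).filter (· ∈ A), ?_, ?_⟩
    · intro x hx
      simpa using (Finset.mem_filter.1 hx).2
    · calc r ≤ ∑ i ∈ Finset.range n, A.indicator f i := hn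
        _ = ∑ a ∈ (Finset.range n).filter (· ∈ A), f a := by
            rw [Finset.sum_filter]
            exact Finset.sum_congr rfl fun x _ => by
              by_cases hx : x ∈ A <;> simp [Set.indicator_apply, hx]
  -- conversely, arbitrarily large finite subsums force positive density
  have hdivpos : ∀ D : Set ℕ,
      (∀ n : ℕ, ∃ G : Finset ℕ, ↑G ⊆ D ∧ (n : ℝ) ≤ ∑ a ∈ G, f a) → 0 < δ D := by
    intro D hD
    rcases lt_or_eq_of_le (hbdd D).1 with h | h
    · exact h
    exfalso
    have hsum : Summable (D.indicator f) := (hiff' D).1 h.symm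
    obtain ⟨n, hn⟩ := exists_nat_gt (∑' a, D.indicator f a)
    obtain ⟨G, hGD, hGsum⟩ := hD n
    have h1 : ∑ a ∈ G, f a = ∑ a ∈ G, D.indicator f a :=
      Finset.sum_congr rfl fun x hx => (Set.indicator_of_mem (hGD hx) f).symm
    have h2 : ∑ a ∈ G, D.indicator f a ≤ ∑' a, D.indicator f a :=
      Summable.sum_le_tsum G (fun i _ => Set.indicator_nonneg (fun a _ => hf0 a) i) hsum
    linarith [hGsum]
  -- the infimum of positive densities of subsets of `A`
  set c : Set ℕ → ℝ := fun A => sInf (δ '' {B | B ⊆ A ∧ 0 < δ B}) with hc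
  have hbdl : ∀ A : Set ℕ, BddBelow (δ '' {B | B ⊆ A ∧ 0 < δ B}) :=
    fun A => ⟨0, by rintro x ⟨B, _, rfl⟩; exact (hbdd B).1⟩
  have hmemA : ∀ A : Set ℕ, 0 < δ A → δ A ∈ δ '' {B | B ⊆ A ∧ 0 < δ B} :=
    fun A hA => ⟨A, ⟨subset_refl A, hA⟩, rfl⟩
  have hcle : ∀ A B : Set ℕ, B ⊆ A → 0 < δ B → c A ≤ δ B :=
    fun A B hBA hB => csInf_le (hbdl A) ⟨B, ⟨hBA, hB⟩, rfl⟩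
  -- the recursive step: pick a subset of near-minimal positive density
  have step : ∀ (p : {A : Set ℕ // 0 < δ A}) (n : ℕ),
      ∃ B : Set ℕ, B ⊆ p.1 ∧ 0 < δ B ∧ δ B < c p.1 + (1/2) ^ n := by
    rintro ⟨A, hA⟩ n
    have hne : (δ '' {B | B ⊆ A ∧ 0 < δ B}).Nonempty := ⟨δ A, hmemA A hA⟩
    obtain ⟨x, ⟨B, ⟨hBA, hB⟩, rfl⟩, hx⟩ :=
      Real.lt_sInf_add_pos hne (by positivity : (0:ℝ) < (1/2) ^ n)
    exact ⟨B, hBA, hB, hx⟩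
  let seq : ℕ → {A : Set ℕ // 0 < δ A} := fun n =>
    Nat.rec ⟨Set.univ, by rw [huniv]; norm_num⟩
      (fun n p => ⟨(step p n).choose, (step p n).choose_spec.2.1⟩) n
  set A : ℕ → Set ℕ := fun n => (seq n).1 with hA
  have hApos : ∀ n, 0 < δ (A n) := fun n => (seq n).2
  have hstep : ∀ n, A (n+1) ⊆ A n ∧ δ (A (n+1)) < c (A n) + (1/2) ^ n :=
    fun n => ⟨(step (seq n) n).choose_spec.1, (step (seq n) n).choose_spec.2.2⟩
  have hchain : ∀ {m n : ℕ}, m ≤ n → A n ⊆ A m := by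
    intro m n hmn
    induction n with
    | zero => simp_all
    | succ k ih =>
      rcases Nat.lt_or_ge m (k+1) with h | h
      · exact ((hstep k).1).trans (ih (Nat.lt_succ_iff.1 h))
      · have : m = k + 1 := le_antisymm hmn h
        subst this; exact subset_refl _
  have hcmono : ∀ {m n : ℕ}, m ≤ n → c (A m) ≤ c (A n) := by
    intro m n hmn
    refine le_csInf ⟨δ (A n), hmemA (A n) (hApos n)⟩ ?_
    rintro x ⟨B, ⟨hBA, hB⟩, rfl⟩
    exact hcle (A m) B (hBA.trans (hchain hmn)) hB
  -- the supremum of the `c (A n)`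
  have hbddc : BddAbove (Set.range fun n => c (A n)) := by
    refine ⟨1, ?_⟩
    rintro x ⟨n, rfl⟩
    exact le_trans (hcle (A n) (A n) (subset_refl _) (hApos n)) (hbdd (A n)).2
  set cstar : ℝ := ⨆ n, c (A n) with hcstar
  have hccstar : ∀ n, c (A n) ≤ cstar := fun n => le_ciSup hbddc n
  -- diagonal finite pieces
  have hGex : ∀ n : ℕ, ∃ G : Finset ℕ, ↑G ⊆ A n ∧ (n : ℝ) ≤ ∑ a ∈ G, f a :=
    fun n => hbig (A n) (ne_of_gt (hApos n)) n
  set G : ℕ → Finset ℕ := fun n => (hGex n).choose with hG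
  have hGA : ∀ n : ℕ, ↑(G n) ⊆ A n := fun n => (hGex n).choose_spec.1
  have hGsum : ∀ n : ℕ, (n : ℝ) ≤ ∑ a ∈ G n, f a := fun n => (hGex n).choose_spec.2
  set D : Set ℕ := ⋃ n, ↑(G n) with hD
  have hDpos : 0 < δ D := by
    refine hdivpos D fun n => ⟨G n, ?_, hGsum n⟩
    exact Set.subset_iUnion (fun n => ((G n : Set ℕ))) n
  set F : ℕ → Finset ℕ := fun N => (Finset.range N).biUnion G with hF
  have hDF : ∀ N, D ⊆ ↑(F N) ∪ A N := by
    intro N x hx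
    obtain ⟨n, hn⟩ := Set.mem_iUnion.1 hx
    rcases Nat.lt_or_ge n N with h | h
    · exact Or.inl (Finset.mem_coe.2 (Finset.mem_biUnion.2
        ⟨n, Finset.mem_range.2 h, Finset.mem_coe.1 hn⟩))
    · exact Or.inr (hchain h (hGA n hn))
  have hFzero : ∀ N, δ ↑(F N) = 0 := fun N => hfin _ (Finset.finite_toSet _)
  -- every positive-density subset of D has density at least cstar
  have hlow : ∀ B : Set ℕ, B ⊆ D → 0 < δ B → cstar ≤ δ B := by
    intro B hBD hB
    refine ciSup_le fun N => ?_
    have hBsub : B ⊆ ↑(F N) ∪ (B ∩ A N) := by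
      intro x hx
      rcases hDF N (hBD hx) with h | h
      · exact Or.inl h
      · exact Or.inr ⟨hx, h⟩
    have h1 : δ B ≤ δ (B ∩ A N) := by
      calc δ B ≤ δ (↑(F N) ∪ (B ∩ A N)) := hmono _ _ hBsub
        _ ≤ δ ↑(F N) + δ (B ∩ A N) := hsub _ _
        _ = δ (B ∩ A N) := by rw [hFzero N]; ring
    have h2 : 0 < δ (B ∩ A N) := lt_of_lt_of_le hB h1
    have h3 : c (A N) ≤ δ (B ∩ A N) :=
      hcle (A N) _ Set.inter_subset_right h2
    exact h3.trans (hmono _ _ Set.inter_subset_left)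
  -- and D itself has density at most cstar
  have hup : δ D ≤ cstar := by
    refine le_of_forall_pos_le_add fun ε hε => ?_
    obtain ⟨N, hN⟩ := exists_pow_lt_of_lt_one hε (by norm_num : (1/2 : ℝ) < 1)
    have h1 : δ D ≤ δ (A (N+1)) := by
      calc δ D ≤ δ (↑(F (N+1)) ∪ A (N+1)) := hmono _ _ (hDF (N+1))
        _ ≤ δ ↑(F (N+1)) + δ (A (N+1)) := hsub _ _
        _ = δ (A (N+1)) := by rw [hFzero (N+1)]; ring
    have h2 : δ (A (N+1)) < c (A N) + (1/2) ^ N := (hstep N).2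
    have h3 : c (A N) ≤ cstar := hccstar N
    linarith
  -- contradiction with atomlessness
  obtain ⟨B, hBD, hBpos, hBlt⟩ := hatom D hDpos
  have := hlow B hBD.subset hBpos
  linarith
end

section
/- Let I be a translation invariant ideal on ℕ containing all finite sets, and suppose there exists an infinite I-translation-almost-disjoint family. Then there exists an abstract upper density δ which is translation invariant, rich (its range is all of [0,1]), and whose zero sets are exactly I. -/
open scoped Classical
open Filter

/-- Translate of a set of naturals by an integer `k`. -/
def intTrans (A : Set ℕ) (k : ℤ) : Set ℕ := {n : ℕ | ∃ a ∈ A, (n : ℤ) = (a : ℤ) + k}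

/-- `A` and `B` are `I`-translation almost disjoint. -/
def ITAD (I : Set (Set ℕ)) (A B : Set ℕ) : Prop :=
  ∀ k : ℤ, intTrans A k ∩ B ∈ I

namespace TAD

lemma mem_intTrans {A : Set ℕ} {k : ℤ} {x : ℕ} :
    x ∈ intTrans A k ↔ ∃ a ∈ A, (x : ℤ) = (a : ℤ) + k := Iff.rfl

lemma intTrans_zero (A : Set ℕ) : intTrans A 0 = A := by
  ext x
  constructor
  · rintro ⟨y, hy, h⟩
    have hxy : x = y := by omega
    rwa [hxy]
  · intro hx
    exact ⟨x, hx, by ring⟩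

lemma intTrans_mono {A B : Set ℕ} (h : A ⊆ B) (k : ℤ) :
    intTrans A k ⊆ intTrans B k := by
  rintro x ⟨a, ha, hx⟩
  exact ⟨a, h ha, hx⟩

lemma intTrans_union (A B : Set ℕ) (k : ℤ) :
    intTrans (A ∪ B) k = intTrans A k ∪ intTrans B k := by
  ext x
  constructor
  · rintro ⟨a, (ha | ha), hx⟩
    · exact Or.inl ⟨a, ha, hx⟩
    · exact Or.inr ⟨a, ha, hx⟩
  · rintro (⟨a, ha, hx⟩ | ⟨a, ha, hx⟩)
    · exact ⟨a, Or.inl ha, hx⟩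
    · exact ⟨a, Or.inr ha, hx⟩

lemma intTrans_inter_intTrans (A B : Set ℕ) (k j : ℤ) :
    intTrans A k ∩ intTrans B j = intTrans (intTrans A (k - j) ∩ B) j := by
  ext x
  constructor
  · rintro ⟨⟨u, hu, hxu⟩, ⟨v, hv, hxv⟩⟩
    exact ⟨v, ⟨⟨u, hu, by omega⟩, hv⟩, hxv⟩
  · rintro ⟨v, ⟨⟨u, hu, hvu⟩, hv⟩, hxv⟩
    exact ⟨⟨u, hu, by omega⟩, ⟨v, hv, hxv⟩⟩

lemma intTrans_comp_subset (A : Set ℕ) (j k : ℤ) :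
    intTrans (intTrans A j) k ⊆ intTrans A (j + k) := by
  rintro x ⟨b, ⟨a, ha, hba⟩, hxb⟩
  exact ⟨a, ha, by omega⟩

lemma subset_intTrans_comp (A : Set ℕ) (k : ℤ) :
    A ⊆ intTrans (intTrans A k) (-k) ∪ {x : ℕ | (x : ℤ) + k < 0} := by
  intro x hx
  by_cases h : 0 ≤ (x : ℤ) + k
  · exact Or.inl ⟨((x : ℤ) + k).toNat, ⟨x, hx, by omega⟩, by omega⟩
  · exact Or.inr (by simpa using by omega)

lemma junk_finite (k : ℤ) : ({x : ℕ | (x : ℤ) + k < 0}).Finite := by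
  apply (Set.finite_Iio ((-k).toNat)).subset
  intro x hx
  simp only [Set.mem_setOf_eq] at hx
  simp only [Set.mem_Iio]
  omega

lemma intTrans_biUnion (S : Set ℕ) (g : ℕ → Set ℕ) (k : ℤ) :
    intTrans (⋃ σ ∈ S, g σ) k = ⋃ σ ∈ S, intTrans (g σ) k := by
  ext x
  constructor
  · rintro ⟨a, ha, hx⟩
    simp only [Set.mem_iUnion] at ha ⊢
    obtain ⟨σ, hσ, haσ⟩ := ha
    exact ⟨σ, hσ, a, haσ, hx⟩
  · intro hx
    simp only [Set.mem_iUnion] at hx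
    obtain ⟨σ, hσ, a, haσ, hx⟩ := hx
    exact ⟨a, Set.mem_biUnion hσ haσ, hx⟩

lemma rTrans_eq (A : Set ℕ) (m : ℕ) : rTrans A m = intTrans A (m : ℤ) := by
  ext x
  constructor
  · rintro ⟨a, ha, rfl⟩
    exact ⟨a, ha, by push_cast; ring⟩
  · rintro ⟨a, ha, h⟩
    have hh : a + m = x := by omega
    exact ⟨a, ha, hh⟩

lemma lTrans_eq (A : Set ℕ) (m : ℕ) : lTrans A m = intTrans A (-(m : ℤ)) := by
  ext x
  constructor
  · intro hx
    exact ⟨x + m, hx, by push_cast; ring⟩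
  · rintro ⟨a, ha, h⟩
    have : x + m = a := by omega
    simpa [lTrans, this] using ha

structure IdealHyp (I : Set (Set ℕ)) : Prop where
  down : ∀ A B : Set ℕ, B ⊆ A → A ∈ I → B ∈ I
  union : ∀ A B : Set ℕ, A ∈ I → B ∈ I → A ∪ B ∈ I
  fin : ∀ A : Set ℕ, A.Finite → A ∈ I
  inv : ∀ (A : Set ℕ) (k : ℤ), A ∈ I ↔ intTrans A k ∈ I

structure SeqHyp (I : Set (Set ℕ)) (a : ℕ → Set ℕ) : Prop where
  notI : ∀ n, a n ∉ I
  tad : ∀ m n, m ≠ n → ∀ k, intTrans (a m) k ∩ a n ∈ I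

variable {I : Set (Set ℕ)} {a : ℕ → Set ℕ}

lemma IdealHyp.empty (hI : IdealHyp I) : (∅ : Set ℕ) ∈ I :=
  hI.fin _ Set.finite_empty

lemma I_finsetUnion (hI : IdealHyp I) {α : Type*} (s : Finset α) (g : α → Set ℕ)
    (h : ∀ i ∈ s, g i ∈ I) : (⋃ i ∈ s, g i) ∈ I := by
  classical
  induction s using Finset.induction_on with
  | empty => simpa using hI.empty
  | @insert b s hb ih =>
      rw [Finset.set_biUnion_insert]
      exact hI.union _ _ (h b (Finset.mem_insert_self b s))
        (ih fun i hi => h i (Finset.mem_insert_of_mem hi))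

lemma I_listUnion (hI : IdealHyp I) {α : Type*} (L : List α) (g : α → Set ℕ)
    (h : ∀ p ∈ L, g p ∈ I) : (⋃ p ∈ L, g p) ∈ I := by
  induction L with
  | nil => simpa using hI.empty
  | cons q L ih =>
      have : (⋃ p ∈ (q :: L), g p) = g q ∪ ⋃ p ∈ L, g p := by
        ext x
        simp only [Set.mem_iUnion, Set.mem_union, List.mem_cons]
        constructor
        · rintro ⟨p, (rfl | hp), hx⟩
          · exact Or.inl hx
          · exact Or.inr ⟨p, hp, hx⟩
        · rintro (hx | ⟨p, hp, hx⟩)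
          · exact ⟨q, Or.inl rfl, hx⟩
          · exact ⟨p, Or.inr hp, hx⟩
      rw [this]
      exact hI.union _ _ (h q List.mem_cons_self)
        (ih fun p hp => h p (List.mem_cons_of_mem q hp))

lemma I_pieces (hI : IdealHyp I) {A E : Set ℕ} {α : Type*} {L : List α}
    (g : α → Set ℕ) (hA : A ∉ I) (hE : E ∈ I)
    (hcov : A ⊆ (⋃ p ∈ L, g p) ∪ E) : ∃ p ∈ L, g p ∩ A ∉ I := by
  by_contra hcon
  push_neg at hcon
  apply hA
  have hsub : A ⊆ (⋃ p ∈ L, g p ∩ A) ∪ (E ∩ A) := by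
    intro x hx
    rcases hcov hx with hx' | hx'
    · simp only [Set.mem_iUnion] at hx'
      obtain ⟨p, hp, hxp⟩ := hx'
      exact Or.inl (Set.mem_biUnion hp ⟨hxp, hx⟩)
    · exact Or.inr ⟨hx', hx⟩
  exact hI.down _ _ hsub
    (hI.union _ _ (I_listUnion hI L _ fun p hp => hcon p hp)
      (hI.down _ _ Set.inter_subset_left hE))

/-! ### The refined TAD sequence -/

def Cset (a : ℕ → Set ℕ) (n : ℕ) : Set ℕ :=
  a n \ {x | ∃ m, m < n ∧ ∃ k : ℤ, k.natAbs ≤ n ∧ x ∈ intTrans (a m) k}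

lemma Cset_subset (a : ℕ → Set ℕ) (n : ℕ) : Cset a n ⊆ a n :=
  Set.diff_subset

lemma Cset_empty {a : ℕ → Set ℕ} {m n : ℕ} {k : ℤ} (hmn : m < n)
    (hk : k.natAbs ≤ n) : intTrans (a m) k ∩ Cset a n = ∅ := by
  apply Set.eq_empty_iff_forall_notMem.mpr
  rintro x ⟨hx1, hx2⟩
  exact hx2.2 ⟨m, hmn, k, hk, hx1⟩

lemma Cset_notI (hI : IdealHyp I) (ha : SeqHyp I a) (n : ℕ) : Cset a n ∉ I := by
  intro hC
  apply ha.notI n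
  have hBad : (⋃ m ∈ Finset.range n, ⋃ k ∈ Finset.Icc (-(n:ℤ)) (n:ℤ),
      (intTrans (a m) k ∩ a n)) ∈ I := by
    apply I_finsetUnion hI
    intro m hm
    apply I_finsetUnion hI
    intro k _
    exact ha.tad m n (Nat.ne_of_lt (Finset.mem_range.mp hm)) k
  have hsub : a n ⊆ Cset a n ∪ (⋃ m ∈ Finset.range n, ⋃ k ∈ Finset.Icc (-(n:ℤ)) (n:ℤ),
      (intTrans (a m) k ∩ a n)) := by
    intro x hx
    by_cases hxC : x ∈ Cset a n
    · exact Or.inl hxC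
    · right
      have : ∃ m, m < n ∧ ∃ k : ℤ, k.natAbs ≤ n ∧ x ∈ intTrans (a m) k := by
        by_contra hcon
        exact hxC ⟨hx, hcon⟩
      obtain ⟨m, hm, k, hk, hxk⟩ := this
      refine Set.mem_biUnion (Finset.mem_range.mpr hm) ?_
      refine Set.mem_biUnion (Finset.mem_Icc.mpr ⟨by omega, by omega⟩) ⟨hxk, hx⟩
  exact hI.down _ _ hsub (hI.union _ _ hC hBad)

lemma Cset_silence (hI : IdealHyp I) (ha : SeqHyp I a) {S : Set ℕ} {τ : ℕ}
    (hτ : τ ∉ S) (k : ℤ) : intTrans (a τ) k ∩ (⋃ σ ∈ S, Cset a σ) ∈ I := by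
  classical
  set N := max τ k.natAbs with hN
  have hmem : (⋃ σ ∈ Finset.range (N+1),
      (if σ ∈ S then intTrans (a τ) k ∩ a σ else ∅)) ∈ I := by
    apply I_finsetUnion hI
    intro σ _
    by_cases hσ : σ ∈ S
    · simp only [hσ, if_true]
      exact ha.tad τ σ (fun h => hτ (h ▸ hσ)) k
    · simp only [hσ, if_false]
      exact hI.empty
  refine hI.down _ _ ?_ hmem
  rintro x ⟨hx1, hx2⟩
  simp only [Set.mem_iUnion] at hx2
  obtain ⟨σ, hσS, hxσ⟩ := hx2
  have hσN : σ ≤ N := by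
    by_contra hgt
    push_neg at hgt
    have h1 : τ < σ := lt_of_le_of_lt (le_max_left _ _) hgt
    have h2 : k.natAbs ≤ σ := le_of_lt (lt_of_le_of_lt (le_max_right _ _) hgt)
    have := Cset_empty (a := a) h1 h2
    exact absurd (Set.eq_empty_iff_forall_notMem.mp this x ⟨hx1, hxσ⟩) (fun h => h)
  have hσr : σ ∈ Finset.range (N+1) := Finset.mem_range.mpr (by omega)
  refine Set.mem_biUnion hσr ?_
  simp only [hσS, if_true]
  exact ⟨hx1, Cset_subset a σ hxσ⟩

/-! ### The trigger set and the lower-bound functional -/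

def Jset (I : Set (Set ℕ)) (a : ℕ → Set ℕ) (B : Set ℕ) : Set ℕ :=
  {σ | ∃ k : ℤ, intTrans (a σ) k ∩ B ∉ I}

lemma Jset_mono {A B : Set ℕ} (hI : IdealHyp I) (h : A ⊆ B) :
    Jset I a A ⊆ Jset I a B := by
  rintro σ ⟨k, hk⟩
  exact ⟨k, fun hc => hk (hI.down _ _ (Set.inter_subset_inter_right _ h) hc)⟩

lemma Jset_empty_of_I (hI : IdealHyp I) {B : Set ℕ} (hB : B ∈ I) :
    Jset I a B = ∅ := by
  apply Set.eq_empty_iff_forall_notMem.mpr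
  rintro σ ⟨k, hk⟩
  exact hk (hI.down _ _ Set.inter_subset_right hB)

lemma Jset_union (hI : IdealHyp I) (A B : Set ℕ) :
    Jset I a (A ∪ B) = Jset I a A ∪ Jset I a B := by
  ext σ
  constructor
  · rintro ⟨k, hk⟩
    by_cases h1 : intTrans (a σ) k ∩ A ∈ I
    · by_cases h2 : intTrans (a σ) k ∩ B ∈ I
      · exfalso
        apply hk
        refine hI.down _ _ ?_ (hI.union _ _ h1 h2)
        rw [Set.inter_union_distrib_left]
      · exact Or.inr ⟨k, h2⟩
    · exact Or.inl ⟨k, h1⟩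
  · rintro (⟨k, hk⟩ | ⟨k, hk⟩)
    · exact ⟨k, fun hc => hk (hI.down _ _
        (Set.inter_subset_inter_right _ Set.subset_union_left) hc)⟩
    · exact ⟨k, fun hc => hk (hI.down _ _
        (Set.inter_subset_inter_right _ Set.subset_union_right) hc)⟩

lemma Jset_intTrans (hI : IdealHyp I) (B : Set ℕ) (j : ℤ) :
    Jset I a (intTrans B j) = Jset I a B := by
  ext σ
  constructor
  · rintro ⟨k, hk⟩
    refine ⟨k - j, fun hc => hk ?_⟩
    rw [intTrans_inter_intTrans]
    exact (hI.inv _ j).mp hc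
  · rintro ⟨k, hk⟩
    refine ⟨k + j, fun hc => hk ?_⟩
    rw [intTrans_inter_intTrans] at hc
    have hkj : k + j - j = k := by ring
    rw [hkj] at hc
    exact (hI.inv _ j).mpr hc

/-! ### Weights -/

def enc (d n b : ℕ) : ℕ := Nat.pair d (Nat.pair n b)

noncomputable def wt (m : ℕ) : ℝ :=
  (1/4 : ℝ) ^ ((Nat.unpair (Nat.unpair m).2).1) +
    (((Nat.unpair (Nat.unpair m).2).2 % 2 : ℕ) : ℝ) *
      (1/2 : ℝ) ^ ((Nat.unpair (Nat.unpair m).2).1)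

lemma wt_enc (d n b : ℕ) :
    wt (enc d n b) = (1/4 : ℝ) ^ n + ((b % 2 : ℕ) : ℝ) * (1/2 : ℝ) ^ n := by
  simp [wt, enc, Nat.unpair_pair]

lemma enc_inj {d n b d' n' b' : ℕ} (h : enc d n b = enc d' n' b') :
    d = d' ∧ n = n' ∧ b = b' := by
  unfold enc at h
  have h1 := (Nat.pair_eq_pair.mp h).1
  have h2 := Nat.pair_eq_pair.mp (Nat.pair_eq_pair.mp h).2
  exact ⟨h1, h2.1, h2.2⟩

lemma wt_pos (m : ℕ) : 0 < wt m := by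
  have h1 : (0:ℝ) < (1/4 : ℝ) ^ ((Nat.unpair (Nat.unpair m).2).1) := by positivity
  have h2 : (0:ℝ) ≤ (((Nat.unpair (Nat.unpair m).2).2 % 2 : ℕ) : ℝ) *
      (1/2 : ℝ) ^ ((Nat.unpair (Nat.unpair m).2).1) := by positivity
  unfold wt; linarith

lemma wt_nonneg (m : ℕ) : 0 ≤ wt m := (wt_pos m).le

lemma min_one_add {x y : ℝ} (hx : 0 ≤ x) (hy : 0 ≤ y) :
    min 1 (x + y) ≤ min 1 x + min 1 y := by
  rcases le_total 1 x with h | h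
  · rw [min_eq_left h]
    have : min 1 (x+y) ≤ 1 := min_le_left _ _
    have : 0 ≤ min 1 y := le_min (by norm_num) hy
    linarith [min_le_left (1:ℝ) (x+y)]
  · rw [min_eq_right h]
    rcases le_total 1 y with h' | h'
    · rw [min_eq_left h']
      linarith [min_le_left (1:ℝ) (x+y)]
    · rw [min_eq_right h']
      exact le_trans (min_le_right _ _) le_rfl

/-! ### The functional f -/

noncomputable def fden (I : Set (Set ℕ)) (a : ℕ → Set ℕ) (B : Set ℕ) : ℝ :=
  sSup {x | ∃ F : Finset ℕ, ↑F ⊆ Jset I a B ∧ x = min 1 (∑ m ∈ F, wt m)}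

lemma fset_nonempty (B : Set ℕ) :
    {x | ∃ F : Finset ℕ, ↑F ⊆ Jset I a B ∧ x = min 1 (∑ m ∈ F, wt m)}.Nonempty :=
  ⟨min 1 (∑ m ∈ (∅ : Finset ℕ), wt m), ∅, by simp, rfl⟩

lemma fset_bdd (B : Set ℕ) :
    BddAbove {x | ∃ F : Finset ℕ, ↑F ⊆ Jset I a B ∧ x = min 1 (∑ m ∈ F, wt m)} := by
  refine ⟨1, ?_⟩
  rintro x ⟨F, hF, rfl⟩
  exact min_le_left _ _

lemma fden_le_one (B : Set ℕ) : fden I a B ≤ 1 := by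
  apply csSup_le (fset_nonempty B)
  rintro x ⟨F, hF, rfl⟩
  exact min_le_left _ _

lemma fden_ge {B : Set ℕ} {F : Finset ℕ} (hF : ↑F ⊆ Jset I a B) :
    min 1 (∑ m ∈ F, wt m) ≤ fden I a B :=
  le_csSup (fset_bdd B) ⟨F, hF, rfl⟩

lemma fden_nonneg (B : Set ℕ) : 0 ≤ fden I a B := by
  have := fden_ge (I := I) (a := a) (B := B) (F := ∅) (by simp)
  simpa using this

lemma fden_mono (hI : IdealHyp I) {A B : Set ℕ} (h : A ⊆ B) :
    fden I a A ≤ fden I a B := by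
  apply csSup_le (fset_nonempty A)
  rintro x ⟨F, hF, rfl⟩
  exact fden_ge (fun m hm => Jset_mono hI h (hF hm))

lemma fden_zero_of_I (hI : IdealHyp I) {B : Set ℕ} (hB : B ∈ I) :
    fden I a B = 0 := by
  apply le_antisymm ?_ (fden_nonneg B)
  apply csSup_le (fset_nonempty B)
  rintro x ⟨F, hF, rfl⟩
  rw [Jset_empty_of_I hI hB] at hF
  have : F = ∅ := by
    apply Finset.eq_empty_iff_forall_notMem.mpr
    intro m hm
    exact absurd (hF hm) (Set.notMem_empty m)
  simp [this]

lemma fden_subadd (hI : IdealHyp I) (A B : Set ℕ) :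
    fden I a (A ∪ B) ≤ fden I a A + fden I a B := by
  classical
  apply csSup_le (fset_nonempty _)
  rintro x ⟨F, hF, rfl⟩
  rw [Jset_union hI] at hF
  set F1 := F.filter (fun m => m ∈ Jset I a A) with hF1
  set F2 := F.filter (fun m => m ∉ Jset I a A) with hF2
  have hsum : ∑ m ∈ F, wt m = ∑ m ∈ F1, wt m + ∑ m ∈ F2, wt m :=
    (Finset.sum_filter_add_sum_filter_not F _ wt).symm
  have h1 : (↑F1 : Set ℕ) ⊆ Jset I a A := by
    intro m hm
    exact (Finset.mem_filter.mp hm).2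
  have h2 : (↑F2 : Set ℕ) ⊆ Jset I a B := by
    intro m hm
    have hm' := Finset.mem_filter.mp hm
    rcases hF (Finset.mem_coe.mpr hm'.1) with h | h
    · exact absurd h hm'.2
    · exact h
  calc min 1 (∑ m ∈ F, wt m)
      ≤ min 1 (∑ m ∈ F1, wt m) + min 1 (∑ m ∈ F2, wt m) := by
        rw [hsum]
        exact min_one_add (Finset.sum_nonneg fun m _ => wt_nonneg m)
          (Finset.sum_nonneg fun m _ => wt_nonneg m)
    _ ≤ fden I a A + fden I a B := add_le_add (fden_ge h1) (fden_ge h2)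

lemma fden_intTrans (hI : IdealHyp I) (B : Set ℕ) (j : ℤ) :
    fden I a (intTrans B j) = fden I a B := by
  unfold fden
  rw [Jset_intTrans hI]

lemma fden_listUnion_le (hI : IdealHyp I) {α : Type*} (L : List α) (G : α → Set ℕ)
    (E : Set ℕ) : ∀ A : Set ℕ, A ⊆ (⋃ p ∈ L, G p) ∪ E →
    fden I a A ≤ (L.map fun p => fden I a (G p)).sum + fden I a E := by
  induction L with
  | nil =>
      intro A hA
      simp only [List.map_nil, List.sum_nil, zero_add]
      apply fden_mono hI
      intro x hx
      rcases hA hx with h | h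
      · simp at h
      · exact h
  | cons q L ih =>
      intro A hA
      have hsplit : A ⊆ G q ∪ ((⋃ p ∈ L, G p) ∪ E) := by
        intro x hx
        rcases hA hx with h | h
        · simp only [Set.mem_iUnion] at h
          obtain ⟨p, hp, hxp⟩ := h
          rcases List.mem_cons.mp hp with rfl | hp'
          · exact Or.inl hxp
          · exact Or.inr (Or.inl (Set.mem_biUnion hp' hxp))
        · exact Or.inr (Or.inr h)
      have h1 : fden I a A ≤ fden I a (G q) + fden I a ((⋃ p ∈ L, G p) ∪ E) :=
        le_trans (fden_mono hI hsplit) (fden_subadd hI _ _)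
      have h2 : fden I a ((⋃ p ∈ L, G p) ∪ E) ≤
          (L.map fun p => fden I a (G p)).sum + fden I a E :=
        ih _ (le_refl _)
      simp only [List.map_cons, List.sum_cons]
      linarith

/-! ### The value decomposition: t = Edد + rr, binary digits -/

noncomputable def Ed (d : ℕ) : ℝ := (1/4 : ℝ) ^ d / 3

lemma Ed_pos (d : ℕ) : 0 < Ed d := by unfold Ed; positivity

lemma Ed_succ (d : ℕ) : Ed d = Ed (d+1) + (1/4 : ℝ)^(d+1) := by
  unfold Ed; rw [pow_succ]; ring

lemma exists_Ed_le {t : ℝ} (ht : 0 < t) : ∃ d, Ed d ≤ t := by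
  obtain ⟨n, hn⟩ := exists_pow_lt_of_lt_one ht (by norm_num : (1/4 : ℝ) < 1)
  refine ⟨n, le_of_lt (lt_of_le_of_lt ?_ hn)⟩
  unfold Ed
  have h4 : (0:ℝ) ≤ (1/4:ℝ)^n := by positivity
  linarith

noncomputable def dd (t : ℝ) : ℕ := if h : ∃ d, Ed d ≤ t then Nat.find h else 0

lemma dd_le {t : ℝ} (ht : 0 < t) : Ed (dd t) ≤ t := by
  unfold dd
  rw [dif_pos (exists_Ed_le ht)]
  exact Nat.find_spec (exists_Ed_le ht)

lemma dd_min {t : ℝ} (ht : 0 < t) {d : ℕ} (hd : d < dd t) : t < Ed d := by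
  unfold dd at hd
  rw [dif_pos (exists_Ed_le ht)] at hd
  have := Nat.find_min (exists_Ed_le ht) hd
  linarith [not_le.mp this]

noncomputable def rr (t : ℝ) : ℝ := t - Ed (dd t)

lemma rr_nonneg {t : ℝ} (ht : 0 < t) : 0 ≤ rr t := by
  unfold rr; linarith [dd_le ht]

lemma t_eq {t : ℝ} : t = Ed (dd t) + rr t := by unfold rr; ring

lemma rr_lt {t : ℝ} (ht : 0 < t) (ht1 : t ≤ 1) : rr t < (1/2 : ℝ)^(dd t) := by
  rcases Nat.eq_zero_or_pos (dd t) with h0 | hpos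
  · rw [h0]
    unfold rr
    rw [h0]
    unfold Ed
    norm_num
    linarith
  · obtain ⟨D, hD⟩ := Nat.exists_eq_add_of_lt hpos
    have hDlt : D < dd t := by omega
    have h1 : t < Ed D := dd_min ht hDlt
    have hdd : dd t = D + 1 := by omega
    have h2 : Ed D = Ed (D+1) + (1/4:ℝ)^(D+1) := Ed_succ D
    have h3 : (1/4:ℝ)^(D+1) ≤ (1/2:ℝ)^(D+1) :=
      pow_le_pow_left₀ (by norm_num) (by norm_num) (D+1)
    unfold rr
    rw [hdd]
    linarith

lemma rr2d_lt_one {t : ℝ} (ht : 0 < t) (ht1 : t ≤ 1) : rr t * 2^(dd t) < 1 := by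
  have h1 := rr_lt ht ht1
  have h2 : (0:ℝ) < 2^(dd t) := by positivity
  have h3 : rr t * 2^(dd t) < (1/2:ℝ)^(dd t) * 2^(dd t) := by
    exact mul_lt_mul_of_pos_right h1 h2
  have h4 : (1/2:ℝ)^(dd t) * 2^(dd t) = 1 := by
    rw [← mul_pow]; norm_num
  linarith

lemma floor_rr {t : ℝ} (ht : 0 < t) (ht1 : t ≤ 1) :
    ⌊rr t * 2^(dd t)⌋₊ = 0 :=
  Nat.floor_eq_zero.mpr (rr2d_lt_one ht ht1)

lemma fl_le {r : ℝ} (hr : 0 ≤ r) (n : ℕ) : ((⌊r * 2^n⌋₊ : ℕ) : ℝ)/2^n ≤ r := by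
  have h2 : (0:ℝ) < 2^n := by positivity
  rw [div_le_iff₀ h2]
  exact Nat.floor_le (by positivity)

lemma lt_fl {r : ℝ} (n : ℕ) : r < ((⌊r * 2^n⌋₊ : ℕ) : ℝ)/2^n + (1/2:ℝ)^n := by
  have h2 : (0:ℝ) < 2^n := by positivity
  have h := Nat.lt_floor_add_one (r * 2^n)
  have h3 : (1/2:ℝ)^n = 1/2^n := by
    rw [div_pow]; norm_num
  rw [h3, ← add_div, lt_div_iff₀ h2]
  linarith

lemma fl_half (r : ℝ) (N : ℕ) : ⌊r * 2^N⌋₊ = ⌊r * 2^(N+1)⌋₊ / 2 := by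
  have h1 : r * 2^N = (r * 2^(N+1)) / ((2:ℕ):ℝ) := by
    push_cast
    rw [pow_succ]
    ring
  rw [h1, Nat.floor_div_natCast]

lemma fl_rec (r : ℝ) (N : ℕ) :
    ((⌊r * 2^(N+1)⌋₊ : ℕ) : ℝ) = 2 * (⌊r * 2^N⌋₊ : ℕ) + ((⌊r * 2^(N+1)⌋₊ % 2 : ℕ) : ℝ) := by
  have h1 := fl_half r N
  have h2 := Nat.div_add_mod (⌊r * 2^(N+1)⌋₊) 2
  have : (⌊r * 2^(N+1)⌋₊ : ℕ) = 2 * ⌊r * 2^N⌋₊ + ⌊r * 2^(N+1)⌋₊ % 2 := by omega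
  exact_mod_cast congrArg (fun x : ℕ => (x : ℝ)) this

lemma dsum_eq (r : ℝ) (d : ℕ) : ∀ N, d ≤ N →
    ∑ n ∈ Finset.Ico (d+1) (N+1),
      ((1/4:ℝ)^n + ((⌊r * 2^n⌋₊ % 2 : ℕ):ℝ) * (1/2:ℝ)^n)
    = (Ed d - Ed N) + (((⌊r * 2^N⌋₊ : ℕ):ℝ)/2^N - ((⌊r * 2^d⌋₊ : ℕ):ℝ)/2^d) := by
  intro N
  induction N with
  | zero =>
      intro hd
      have hd0 : d = 0 := Nat.le_zero.mp hd
      subst hd0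
      simp
  | succ N ih =>
      intro hd
      rcases Nat.lt_or_ge d (N+1) with hlt | hge
      · have hdN : d ≤ N := by omega
        rw [Finset.sum_Ico_succ_top (by omega : d + 1 ≤ N + 1)]
        rw [ih hdN]
        have hEd : Ed N - Ed (N+1) = (1/4:ℝ)^(N+1) := by
          rw [Ed_succ N]; ring
        have hfl := fl_rec r N
        have h2 : (0:ℝ) < 2^N := by positivity
        have h2' : (0:ℝ) < 2^(N+1) := by positivity
        have hdig : ((⌊r * 2^(N+1)⌋₊ % 2 : ℕ):ℝ) * (1/2:ℝ)^(N+1)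
            = ((⌊r * 2^(N+1)⌋₊ : ℕ):ℝ)/2^(N+1) - ((⌊r * 2^N⌋₊ : ℕ):ℝ)/2^N := by
          rw [hfl]
          have hp : (2:ℝ)^(N+1) = 2 * 2^N := by rw [pow_succ]; ring
          have hq : (1/2:ℝ)^(N+1) = 1 / (2 * 2^N) := by
            rw [div_pow, one_pow, pow_succ]
            ring
          rw [hp, hq]
          field_simp
          ring
        linarith [hEd, hdig]
      · have hdN : d = N + 1 := by omega
        subst hdN
        simp

def Sset (t : ℝ) : Set ℕ :=
  {m | ∃ n, dd t < n ∧ m = enc (dd t) n ⌊rr t * 2^n⌋₊}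

noncomputable def Gfin (t : ℝ) (N : ℕ) : Finset ℕ :=
  (Finset.Ico (dd t + 1) (N+1)).image (fun n => enc (dd t) n ⌊rr t * 2^n⌋₊)

lemma Gfin_subset_S (t : ℝ) (N : ℕ) : ↑(Gfin t N) ⊆ Sset t := by
  intro m hm
  simp only [Gfin, Finset.coe_image, Set.mem_image, Finset.mem_coe,
    Finset.mem_Ico] at hm
  obtain ⟨n, ⟨hn1, _⟩, rfl⟩ := hm
  exact ⟨n, by omega, rfl⟩

lemma sum_Gfin (t : ℝ) (N : ℕ) :
    ∑ m ∈ Gfin t N, wt m = ∑ n ∈ Finset.Ico (dd t + 1) (N+1),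
      ((1/4:ℝ)^n + ((⌊rr t * 2^n⌋₊ % 2 : ℕ):ℝ) * (1/2:ℝ)^n) := by
  unfold Gfin
  rw [Finset.sum_image]
  · apply Finset.sum_congr rfl
    intro n _
    rw [wt_enc]
  · intro x _ y _ h
    exact (enc_inj h).2.1

lemma sum_Gfin_le {t : ℝ} (ht : 0 < t) (ht1 : t ≤ 1) (N : ℕ) (hN : dd t ≤ N) :
    ∑ m ∈ Gfin t N, wt m ≤ t := by
  rw [sum_Gfin, dsum_eq (rr t) (dd t) N hN, floor_rr ht ht1]
  have h1 : ((⌊rr t * 2^N⌋₊ : ℕ):ℝ)/2^N ≤ rr t := fl_le (rr_nonneg ht) N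
  have h2 : (0:ℝ) < Ed N := Ed_pos N
  have h3 : t = Ed (dd t) + rr t := t_eq
  simp only [Nat.cast_zero, zero_div, sub_zero]
  linarith

lemma sum_Gfin_tendsto {t : ℝ} (ht : 0 < t) (ht1 : t ≤ 1) :
    Filter.Tendsto (fun N => ∑ m ∈ Gfin t N, wt m) Filter.atTop (nhds t) := by
  have hEdN : Filter.Tendsto (fun N : ℕ => Ed N) Filter.atTop (nhds 0) := by
    unfold Ed
    have := tendsto_pow_atTop_nhds_zero_of_lt_one
      (by norm_num : (0:ℝ) ≤ 1/4) (by norm_num : (1/4:ℝ) < 1)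
    simpa using this.div_const 3
  have hfl : Filter.Tendsto (fun N : ℕ => ((⌊rr t * 2^N⌋₊ : ℕ):ℝ)/2^N)
      Filter.atTop (nhds (rr t)) := by
    have hup : ∀ N : ℕ, ((⌊rr t * 2^N⌋₊ : ℕ):ℝ)/2^N ≤ rr t :=
      fun N => fl_le (rr_nonneg ht) N
    have hlow : ∀ N : ℕ, rr t - (1/2:ℝ)^N ≤ ((⌊rr t * 2^N⌋₊ : ℕ):ℝ)/2^N := by
      intro N
      have := lt_fl (r := rr t) N
      linarith
    have hl : Filter.Tendsto (fun N : ℕ => rr t - (1/2:ℝ)^N) Filter.atTop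
        (nhds (rr t)) := by
      have h2 := tendsto_pow_atTop_nhds_zero_of_lt_one
        (by norm_num : (0:ℝ) ≤ 1/2) (by norm_num : (1/2:ℝ) < 1)
      have := Filter.Tendsto.sub (tendsto_const_nhds (x := rr t)) h2
      simpa using this
    exact tendsto_of_tendsto_of_tendsto_of_le_of_le hl tendsto_const_nhds hlow hup
  have key : Filter.Tendsto (fun N => (Ed (dd t) - Ed N) +
      (((⌊rr t * 2^N⌋₊ : ℕ):ℝ)/2^N - ((⌊rr t * 2^(dd t)⌋₊ : ℕ):ℝ)/2^(dd t)))
      Filter.atTop (nhds t) := by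
    rw [floor_rr ht ht1]
    simp only [Nat.cast_zero, zero_div, sub_zero]
    have : Filter.Tendsto (fun N => (Ed (dd t) - Ed N) + ((⌊rr t * 2^N⌋₊ : ℕ):ℝ)/2^N)
        Filter.atTop (nhds ((Ed (dd t) - 0) + rr t)) :=
      Filter.Tendsto.add ((tendsto_const_nhds).sub hEdN) hfl
    have ht' : (Ed (dd t) - 0) + rr t = t := by
      have := t_eq (t := t); linarith
    rwa [ht'] at this
  apply key.congr'
  filter_upwards [Filter.eventually_ge_atTop (dd t)] with N hN
  rw [sum_Gfin, dsum_eq (rr t) (dd t) N hN]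

lemma finsub_S {t : ℝ} (F : Finset ℕ) (hF : ↑F ⊆ Sset t) :
    ∃ N, dd t ≤ N ∧ F ⊆ Gfin t N := by
  classical
  refine ⟨max (dd t) (F.sup (fun m => (Nat.unpair (Nat.unpair m).2).1)),
    le_max_left _ _, ?_⟩
  intro m hm
  obtain ⟨n, hn, rfl⟩ := hF hm
  have hcoord : (Nat.unpair (Nat.unpair (enc (dd t) n ⌊rr t * 2^n⌋₊)).2).1 = n := by
    simp [enc, Nat.unpair_pair]
  have hsup : n ≤ F.sup (fun m => (Nat.unpair (Nat.unpair m).2).1) := by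
    have h := Finset.le_sup (f := fun m => (Nat.unpair (Nat.unpair m).2).1) hm
    simp only [enc, Nat.unpair_pair] at h
    exact h
  simp only [Gfin, Finset.mem_image]
  exact ⟨n, Finset.mem_Ico.mpr ⟨by omega, by omega⟩, rfl⟩

lemma sum_F_le {t : ℝ} (ht : 0 < t) (ht1 : t ≤ 1) (F : Finset ℕ)
    (hF : ↑F ⊆ Sset t) : ∑ m ∈ F, wt m ≤ t := by
  obtain ⟨N, hN, hFG⟩ := finsub_S F hF
  calc ∑ m ∈ F, wt m ≤ ∑ m ∈ Gfin t N, wt m :=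
        Finset.sum_le_sum_of_subset_of_nonneg hFG (fun m _ _ => wt_nonneg m)
    _ ≤ t := sum_Gfin_le ht ht1 N hN

lemma Sset_ad {t₁ t₂ : ℝ} (h₁ : 0 < t₁) (h₂ : 0 < t₂) (hne : t₁ ≠ t₂) :
    (Sset t₁ ∩ Sset t₂).Finite := by
  by_cases hd : dd t₁ = dd t₂
  · have hrr : rr t₁ ≠ rr t₂ := by
      intro h
      apply hne
      rw [t_eq (t := t₁), t_eq (t := t₂), hd, h]
    set ε := |rr t₁ - rr t₂| with hε
    have hεpos : 0 < ε := abs_pos.mpr (sub_ne_zero.mpr hrr)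
    obtain ⟨N, hN⟩ := exists_pow_lt_of_lt_one (half_pos hεpos)
      (by norm_num : (1/2:ℝ) < 1)
    apply Set.Finite.subset
      (Set.Finite.image (fun n => enc (dd t₁) n ⌊rr t₁ * 2^n⌋₊)
        (Set.finite_Iio (N+1)))
    rintro m ⟨⟨n, hn, rfl⟩, ⟨n', hn', heq⟩⟩
    obtain ⟨hd', hn'', hb⟩ := enc_inj heq
    subst hn''
    refine ⟨n, ?_, rfl⟩
    simp only [Set.mem_Iio]
    by_contra hbig
    push_neg at hbig
    have hnN : N + 1 ≤ n := hbig
    have hfl1 : |rr t₁ - ((⌊rr t₁ * 2^n⌋₊ : ℕ):ℝ)/2^n| < (1/2:ℝ)^n := by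
      have hu := fl_le (rr_nonneg h₁) n
      have hl := lt_fl (r := rr t₁) n
      rw [abs_lt]
      constructor <;> linarith
    have hfl2 : |((⌊rr t₂ * 2^n⌋₊ : ℕ):ℝ)/2^n - rr t₂| < (1/2:ℝ)^n := by
      have hu := fl_le (rr_nonneg h₂) n
      have hl := lt_fl (r := rr t₂) n
      rw [abs_sub_comm, abs_lt]
      constructor <;> linarith
    have htri : ε < 2 * (1/2:ℝ)^n := by
      have habs : |rr t₁ - rr t₂| ≤ |rr t₁ - ((⌊rr t₁ * 2^n⌋₊ : ℕ):ℝ)/2^n| +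
          |((⌊rr t₂ * 2^n⌋₊ : ℕ):ℝ)/2^n - rr t₂| := by
        rw [hb]
        calc |rr t₁ - rr t₂| = |(rr t₁ - ((⌊rr t₂ * 2^n⌋₊ : ℕ):ℝ)/2^n) +
            (((⌊rr t₂ * 2^n⌋₊ : ℕ):ℝ)/2^n - rr t₂)| := by rw [sub_add_sub_cancel]
          _ ≤ _ := abs_add_le _ _
      rw [hε]
      linarith
    have hmono : (1/2:ℝ)^n ≤ (1/2:ℝ)^(N+1) :=
      pow_le_pow_of_le_one (by norm_num) (by norm_num) hnN
    have hps : (1/2:ℝ)^(N+1) = (1/2:ℝ)^N / 2 := by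
      rw [pow_succ]; ring
    linarith
  · have : Sset t₁ ∩ Sset t₂ = ∅ := by
      apply Set.eq_empty_iff_forall_notMem.mpr
      rintro m ⟨⟨n, hn, rfl⟩, ⟨n', hn', heq⟩⟩
      exact hd (enc_inj heq).1
    rw [this]
    exact Set.finite_empty

/-! ### The witnesses -/

def Wit (a : ℕ → Set ℕ) (t : ℝ) : Set ℕ := ⋃ σ ∈ Sset t, Cset a σ

lemma Jset_Wit (hI : IdealHyp I) (ha : SeqHyp I a) (t : ℝ) :
    Jset I a (Wit a t) = Sset t := by
  apply Set.Subset.antisymm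
  · rintro τ ⟨k, hk⟩
    by_contra hτ
    exact hk (Cset_silence hI ha hτ k)
  · intro σ hσ
    refine ⟨0, fun hc => Cset_notI hI ha σ (hI.down _ _ ?_ hc)⟩
    rw [intTrans_zero]
    exact Set.subset_inter (Cset_subset a σ) (Set.subset_biUnion_of_mem hσ)

lemma fden_Wit (hI : IdealHyp I) (ha : SeqHyp I a) {t : ℝ} (ht : 0 < t)
    (ht1 : t ≤ 1) : fden I a (Wit a t) = t := by
  apply le_antisymm
  · apply csSup_le (fset_nonempty _)
    rintro x ⟨F, hF, rfl⟩
    rw [Jset_Wit hI ha] at hF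
    exact le_trans (min_le_right _ _) (sum_F_le ht ht1 F hF)
  · apply le_of_tendsto (sum_Gfin_tendsto ht ht1)
    filter_upwards [Filter.eventually_ge_atTop (dd t)] with N hN
    have hsub : ↑(Gfin t N) ⊆ Jset I a (Wit a t) := by
      rw [Jset_Wit hI ha]
      exact Gfin_subset_S t N
    have h1 := fden_ge hsub
    have h2 : min 1 (∑ m ∈ Gfin t N, wt m) = ∑ m ∈ Gfin t N, wt m :=
      min_eq_right (le_trans (sum_Gfin_le ht ht1 N hN) ht1)
    rwa [h2] at h1

lemma fden_univ (hI : IdealHyp I) (ha : SeqHyp I a) :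
    fden I a Set.univ = 1 := by
  apply le_antisymm (fden_le_one _)
  have hne : enc 0 1 1 ≠ enc 0 2 1 := by
    intro h
    exact absurd (enc_inj h).2.1 (by norm_num)
  have hsub : ↑({enc 0 1 1, enc 0 2 1} : Finset ℕ) ⊆ Jset I a Set.univ := by
    intro σ _
    refine ⟨0, ?_⟩
    rw [intTrans_zero, Set.inter_univ]
    exact ha.notI σ
  have h1 := fden_ge hsub
  have h2 : ∑ m ∈ ({enc 0 1 1, enc 0 2 1} : Finset ℕ), wt m = 17/16 := by
    rw [Finset.sum_pair hne, wt_enc, wt_enc]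
    norm_num
  rw [h2, min_eq_left (by norm_num)] at h1
  exact h1

/-! ### The density δ -/

def CostP (I : Set (Set ℕ)) (a : ℕ → Set ℕ) (A : Set ℕ) (c : ℝ) : Prop :=
  c = 1 ∨ ∃ L : List (ℝ × ℤ), ∃ E ∈ I, (∀ p ∈ L, p.1 ∈ Set.Ioc (0:ℝ) 1) ∧
    A ⊆ (⋃ p ∈ L, intTrans (Wit a p.1) p.2) ∪ E ∧ c = (L.map Prod.fst).sum

noncomputable def del (I : Set (Set ℕ)) (a : ℕ → Set ℕ) (A : Set ℕ) : ℝ :=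
  sInf {c | CostP I a A c}

lemma cost_nonneg {A : Set ℕ} {c : ℝ} (hc : CostP I a A c) : 0 ≤ c := by
  rcases hc with rfl | ⟨L, E, _, hpos, _, rfl⟩
  · norm_num
  · apply List.sum_nonneg
    intro x hx
    obtain ⟨p, hp, rfl⟩ := List.mem_map.mp hx
    exact (hpos p hp).1.le

lemma costs_nonempty (A : Set ℕ) : {c | CostP I a A c}.Nonempty :=
  ⟨1, Or.inl rfl⟩

lemma costs_bddBelow (A : Set ℕ) : BddBelow {c | CostP I a A c} :=
  ⟨0, fun _ hc => cost_nonneg hc⟩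

lemma del_nonneg (A : Set ℕ) : 0 ≤ del I a A :=
  le_csInf (costs_nonempty A) (fun _ hc => cost_nonneg hc)

lemma del_le_cost {A : Set ℕ} {c : ℝ} (hc : CostP I a A c) : del I a A ≤ c :=
  csInf_le (costs_bddBelow A) hc

lemma del_le_one (A : Set ℕ) : del I a A ≤ 1 :=
  del_le_cost (Or.inl rfl)

lemma del_ge_minf (hI : IdealHyp I) (ha : SeqHyp I a) (A : Set ℕ) :
    min 1 (fden I a A) ≤ del I a A := by
  apply le_csInf (costs_nonempty A)
  rintro c (rfl | ⟨L, E, hE, hpos, hcov, rfl⟩)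
  · exact min_le_left _ _
  · refine le_trans (min_le_right _ _) ?_
    have h1 := fden_listUnion_le (I := I) (a := a) hI L (fun p => intTrans (Wit a p.1) p.2) E A hcov
    have h2 : fden I a E = 0 := fden_zero_of_I hI hE
    have h3 : (L.map fun p => fden I a (intTrans (Wit a p.1) p.2)) = L.map Prod.fst := by
      apply List.map_congr_left
      intro p hp
      rw [fden_intTrans hI, fden_Wit hI ha (hpos p hp).1 (hpos p hp).2]
    rw [h3, h2] at h1
    linarith

lemma del_mono {A B : Set ℕ} (h : A ⊆ B) :
    del I a A ≤ del I a B := by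
  apply csInf_le_csInf (costs_bddBelow A) (costs_nonempty B)
  rintro c (rfl | ⟨L, E, hE, hpos, hcov, rfl⟩)
  · exact Or.inl rfl
  · exact Or.inr ⟨L, E, hE, hpos, h.trans hcov, rfl⟩

lemma del_union_le (hI : IdealHyp I) (A B : Set ℕ) :
    del I a (A ∪ B) ≤ del I a A + del I a B := by
  have key : ∀ cA, CostP I a A cA → ∀ cB, CostP I a B cB →
      del I a (A ∪ B) ≤ cA + cB := by
    intro cA hcA cB hcB
    rcases hcA with rfl | ⟨L₁, E₁, hE₁, hpos₁, hcov₁, rfl⟩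
    · have := del_le_one (I := I) (a := a) (A ∪ B)
      have := cost_nonneg hcB
      linarith
    rcases hcB with rfl | ⟨L₂, E₂, hE₂, hpos₂, hcov₂, rfl⟩
    · have := del_le_one (I := I) (a := a) (A ∪ B)
      have hc : (0:ℝ) ≤ (L₁.map Prod.fst).sum :=
        cost_nonneg (Or.inr ⟨L₁, E₁, hE₁, hpos₁, hcov₁, rfl⟩)
      linarith
    apply del_le_cost
    refine Or.inr ⟨L₁ ++ L₂, E₁ ∪ E₂, hI.union _ _ hE₁ hE₂, ?_, ?_, ?_⟩
    · intro p hp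
      rcases List.mem_append.mp hp with h | h
      · exact hpos₁ p h
      · exact hpos₂ p h
    · rintro x (hx | hx)
      · rcases hcov₁ hx with h | h
        · simp only [Set.mem_iUnion] at h
          obtain ⟨p, hp, hxp⟩ := h
          exact Or.inl (Set.mem_biUnion (List.mem_append_left L₂ hp) hxp)
        · exact Or.inr (Or.inl h)
      · rcases hcov₂ hx with h | h
        · simp only [Set.mem_iUnion] at h
          obtain ⟨p, hp, hxp⟩ := h
          exact Or.inl (Set.mem_biUnion (List.mem_append_right L₁ hp) hxp)
        · exact Or.inr (Or.inr h)
    · rw [List.map_append, List.sum_append]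
  have h1 : ∀ cB, CostP I a B cB → del I a (A ∪ B) - cB ≤ del I a A := by
    intro cB hcB
    apply le_csInf (costs_nonempty A)
    intro cA hcA
    linarith [key cA hcA cB hcB]
  have h2 : del I a (A ∪ B) - del I a A ≤ del I a B := by
    apply le_csInf (costs_nonempty B)
    intro cB hcB
    linarith [h1 cB hcB]
  linarith

lemma del_of_I (hI : IdealHyp I) {A : Set ℕ} (hA : A ∈ I) : del I a A = 0 := by
  apply le_antisymm ?_ (del_nonneg A)
  apply del_le_cost
  refine Or.inr ⟨[], A, hA, by simp, ?_, by simp⟩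
  intro x hx
  simp only [List.not_mem_nil]
  right
  exact hx

lemma del_univ (hI : IdealHyp I) (ha : SeqHyp I a) :
    del I a (Set.univ : Set ℕ) = 1 := by
  apply le_antisymm (del_le_one _)
  have := del_ge_minf hI ha Set.univ
  rw [fden_univ hI ha, min_self] at this
  exact this

lemma del_Wit (hI : IdealHyp I) (ha : SeqHyp I a) {t : ℝ} (ht : 0 < t)
    (ht1 : t ≤ 1) : del I a (Wit a t) = t := by
  apply le_antisymm
  · apply del_le_cost
    refine Or.inr ⟨[(t, 0)], ∅, hI.empty, ?_, ?_, by simp⟩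
    · intro p hp
      simp only [List.mem_singleton] at hp
      subst hp
      exact ⟨ht, ht1⟩
    · intro x hx
      left
      simp only [Set.mem_iUnion]
      refine ⟨(t, 0), by simp, ?_⟩
      rw [intTrans_zero]
      exact hx
  · have := del_ge_minf hI ha (Wit a t)
    rw [fden_Wit hI ha ht ht1, min_eq_right ht1] at this
    exact this

lemma del_intTrans_le (A : Set ℕ) (hI : IdealHyp I) (k : ℤ) :
    del I a (intTrans A k) ≤ del I a A := by
  apply csInf_le_csInf (costs_bddBelow _) (costs_nonempty A)
  rintro c (rfl | ⟨L, E, hE, hpos, hcov, rfl⟩)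
  · exact Or.inl rfl
  · refine Or.inr ⟨L.map (fun p => (p.1, p.2 + k)), intTrans E k,
      (hI.inv E k).mp hE, ?_, ?_, ?_⟩
    · intro p hp
      obtain ⟨q, hq, rfl⟩ := List.mem_map.mp hp
      exact hpos q hq
    · rintro x ⟨y, hy, hxy⟩
      rcases hcov hy with h | h
      · simp only [Set.mem_iUnion] at h
        obtain ⟨p, hp, hyp⟩ := h
        left
        simp only [Set.mem_iUnion]
        refine ⟨(p.1, p.2 + k), List.mem_map.mpr ⟨p, hp, rfl⟩, ?_⟩
        exact intTrans_comp_subset (Wit a p.1) p.2 k ⟨y, hyp, hxy⟩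
      · exact Or.inr ⟨y, h, hxy⟩
    · rw [List.map_map]
      rfl

lemma del_intTrans (hI : IdealHyp I) (A : Set ℕ) (k : ℤ) :
    del I a (intTrans A k) = del I a A := by
  apply le_antisymm (del_intTrans_le A hI k)
  have hsub := subset_intTrans_comp A k
  calc del I a A ≤ del I a (intTrans (intTrans A k) (-k) ∪ {x : ℕ | (x:ℤ) + k < 0}) :=
        del_mono hsub
    _ ≤ del I a (intTrans (intTrans A k) (-k)) + del I a {x : ℕ | (x:ℤ) + k < 0} :=
        del_union_le hI _ _
    _ = del I a (intTrans (intTrans A k) (-k)) := by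
        rw [del_of_I hI (hI.fin _ (junk_finite k))]
        ring
    _ ≤ del I a (intTrans A k) := del_intTrans_le _ hI (-k)

lemma core (hI : IdealHyp I) (ha : SeqHyp I a) {t₁ t₂ : ℝ} (h₁ : 0 < t₁)
    (h₂ : 0 < t₂) (hne : t₁ ≠ t₂) (k₁ k₂ : ℤ) {D A : Set ℕ}
    (hD1 : D ⊆ intTrans (Wit a t₁) k₁) (hD2 : D ⊆ intTrans (Wit a t₂) k₂)
    (hDA : D ⊆ A) (hD : D ∉ I) : ∃ σ, intTrans (a σ) k₁ ∩ A ∉ I := by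
  classical
  set N₀ := (k₁ - k₂).natAbs + 1 with hN₀
  have hfin := Sset_ad h₁ h₂ hne
  by_contra hcon
  push_neg at hcon
  apply hD
  have hBadI : (⋃ σ ∈ Finset.range N₀, ⋃ τ ∈ Finset.range N₀,
      (if σ ≠ τ then intTrans (a σ) k₁ ∩ intTrans (a τ) k₂ else ∅)) ∈ I := by
    apply I_finsetUnion hI
    intro σ _
    apply I_finsetUnion hI
    intro τ _
    by_cases hστ : σ ≠ τ
    · rw [if_pos hστ, intTrans_inter_intTrans]
      exact (hI.inv _ k₂).mp (ha.tad σ τ hστ (k₁ - k₂))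
    · rw [if_neg hστ]
      exact hI.empty
  have hΔI : (⋃ σ ∈ hfin.toFinset, (intTrans (Cset a σ) k₁ ∩ D)) ∈ I := by
    apply I_finsetUnion hI
    intro σ _
    refine hI.down _ _ ?_ (hcon σ)
    exact Set.inter_subset_inter (intTrans_mono (Cset_subset a σ) k₁) hDA
  refine hI.down _ _ ?_ (hI.union _ _ hΔI hBadI)
  intro x hxD
  have hx1 : x ∈ ⋃ σ ∈ Sset t₁, intTrans (Cset a σ) k₁ := by
    have := hD1 hxD
    rwa [Wit, intTrans_biUnion] at this
  have hx2 : x ∈ ⋃ τ ∈ Sset t₂, intTrans (Cset a τ) k₂ := by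
    have := hD2 hxD
    rwa [Wit, intTrans_biUnion] at this
  simp only [Set.mem_iUnion] at hx1 hx2
  obtain ⟨σ, hσS, hxσ⟩ := hx1
  obtain ⟨τ, hτS, hxτ⟩ := hx2
  by_cases hστ : σ = τ
  · subst hστ
    left
    have hmem : σ ∈ hfin.toFinset := by
      rw [Set.Finite.mem_toFinset]
      exact ⟨hσS, hτS⟩
    exact Set.mem_biUnion hmem ⟨hxσ, hxD⟩
  · -- cross term: bound indices
    obtain ⟨c₁, hc₁, hxc₁⟩ := hxσ
    obtain ⟨c₂, hc₂, hxc₂⟩ := hxτ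
    have hcc : (c₂ : ℤ) = (c₁ : ℤ) + (k₁ - k₂) := by omega
    have hbound : σ < N₀ ∧ τ < N₀ := by
      rcases Nat.lt_or_ge σ τ with hlt | hge
      · -- σ < τ : c₂ ∈ intTrans (a σ) (k₁ - k₂) ∩ Cset a τ
        have hmem : c₂ ∈ intTrans (a σ) (k₁ - k₂) ∩ Cset a τ :=
          ⟨⟨c₁, Cset_subset a σ hc₁, hcc⟩, hc₂⟩
        have : ¬ ((k₁ - k₂).natAbs ≤ τ) := by
          intro hk
          have := Cset_empty (a := a) hlt hk
          exact absurd hmem (by rw [this]; exact Set.notMem_empty c₂)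
        omega
      · have hgt : τ < σ := by
          omega
        have hmem : c₁ ∈ intTrans (a τ) (k₂ - k₁) ∩ Cset a σ :=
          ⟨⟨c₂, Cset_subset a τ hc₂, by omega⟩, hc₁⟩
        have : ¬ ((k₂ - k₁).natAbs ≤ σ) := by
          intro hk
          have := Cset_empty (a := a) hgt hk
          exact absurd hmem (by rw [this]; exact Set.notMem_empty c₁)
        omega
    right
    have h1 : σ ∈ Finset.range N₀ := Finset.mem_range.mpr hbound.1
    have h2 : τ ∈ Finset.range N₀ := Finset.mem_range.mpr hbound.2
    refine Set.mem_biUnion h1 (Set.mem_biUnion h2 ?_)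
    rw [if_pos hστ]
    exact ⟨⟨c₁, Cset_subset a σ hc₁, hxc₁⟩, ⟨c₂, Cset_subset a τ hc₂, hxc₂⟩⟩

lemma del_pos (hI : IdealHyp I) (ha : SeqHyp I a) {A : Set ℕ} (hA : A ∉ I) :
    0 < del I a A := by
  by_contra hle
  push_neg at hle
  have h0 : del I a A = 0 := le_antisymm hle (del_nonneg A)
  have hlt1 : sInf {c | CostP I a A c} < 1 := by
    rw [← del]; rw [h0]; norm_num
  obtain ⟨c₁, hc₁, hclt₁⟩ := exists_lt_of_csInf_lt (costs_nonempty A) hlt1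
  rcases hc₁ with rfl | ⟨L₁, E₁, hE₁, hpos₁, hcov₁, rfl⟩
  · exact absurd hclt₁ (lt_irrefl 1)
  obtain ⟨p₁, hp₁, hD₁⟩ := I_pieces hI _ hA hE₁ hcov₁
  have ht₁ := hpos₁ p₁ hp₁
  have hlt2 : sInf {c | CostP I a A c} < p₁.1 := by
    rw [← del, h0]; exact ht₁.1
  obtain ⟨c₂, hc₂, hclt₂⟩ := exists_lt_of_csInf_lt (costs_nonempty A) hlt2
  rcases hc₂ with rfl | ⟨L₂, E₂, hE₂, hpos₂, hcov₂, rfl⟩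
  · linarith [ht₁.2]
  have hcov₂' : intTrans (Wit a p₁.1) p₁.2 ∩ A ⊆
      (⋃ p ∈ L₂, intTrans (Wit a p.1) p.2) ∪ E₂ :=
    Set.inter_subset_right.trans hcov₂
  obtain ⟨p₂, hp₂, hD₂⟩ := I_pieces hI _ hD₁ hE₂ hcov₂'
  have ht₂ := hpos₂ p₂ hp₂
  have hp₂sum : p₂.1 ≤ (L₂.map Prod.fst).sum := by
    apply List.single_le_sum
    · intro x hx
      obtain ⟨q, hq, rfl⟩ := List.mem_map.mp hx
      exact (hpos₂ q hq).1.le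
    · exact List.mem_map_of_mem (f := Prod.fst) hp₂
  have hne : p₁.1 ≠ p₂.1 := by
    intro h
    rw [← h] at hp₂sum
    linarith
  obtain ⟨σ, hσ⟩ := core hI ha ht₁.1 ht₂.1 hne p₁.2 p₂.2
    (D := intTrans (Wit a p₂.1) p₂.2 ∩ (intTrans (Wit a p₁.1) p₁.2 ∩ A))
    (Set.inter_subset_right.trans Set.inter_subset_left)
    Set.inter_subset_left
    (Set.inter_subset_right.trans Set.inter_subset_right)
    hD₂
  have hF : ↑({σ} : Finset ℕ) ⊆ Jset I a A := by
    intro m hm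
    simp only [Finset.coe_singleton, Set.mem_singleton_iff] at hm
    subst hm
    exact ⟨p₁.2, hσ⟩
  have hfA := fden_ge hF
  rw [Finset.sum_singleton] at hfA
  have hpos : 0 < min 1 (fden I a A) := by
    have h1 : 0 < min 1 (wt σ) := lt_min one_pos (wt_pos σ)
    exact lt_min one_pos (lt_of_lt_of_le h1 hfA)
  have := del_ge_minf hI ha A
  rw [h0] at this
  linarith

end TAD

theorem exists_density_from_TAD_family (I : Set (Set ℕ))
    (h_univ : (Set.univ : Set ℕ) ∉ I)
    (h_down : ∀ A B : Set ℕ, B ⊆ A → A ∈ I → B ∈ I)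
    (h_union : ∀ A B : Set ℕ, A ∈ I → B ∈ I → A ∪ B ∈ I)
    (h_fin : ∀ A : Set ℕ, A.Finite → A ∈ I)
    (h_inv : ∀ (A : Set ℕ) (k : ℤ), A ∈ I ↔ intTrans A k ∈ I)
    (𝒜 : Set (Set ℕ)) (h_inf : 𝒜.Infinite)
    (h_notI : ∀ A ∈ 𝒜, A ∉ I)
    (h_tad : ∀ A ∈ 𝒜, ∀ B ∈ 𝒜, A ≠ B → ITAD I A B) :
    ∃ δ : Set ℕ → ℝ, IsUpperDensity δ ∧ TransInv δ ∧
      Set.range δ = Set.Icc (0 : ℝ) 1 ∧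
      ∀ A : Set ℕ, (δ A = 0 ↔ A ∈ I) := by
  classical
  have hI : TAD.IdealHyp I := ⟨h_down, h_union, h_fin, h_inv⟩
  let e := h_inf.natEmbedding
  let a : ℕ → Set ℕ := fun n => (e n : Set ℕ)
  have hamem : ∀ n, a n ∈ 𝒜 := fun n => (e n).2
  have hainj : Function.Injective a := by
    intro m n h
    have : e m = e n := Subtype.coe_injective h
    exact e.injective this
  have ha : TAD.SeqHyp I a :=
    ⟨fun n => h_notI _ (hamem n),
     fun m n hmn k => h_tad _ (hamem m) _ (hamem n) (fun h => hmn (hainj h)) k⟩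
  refine ⟨TAD.del I a, ?_, ?_, ?_, ?_⟩
  · refine ⟨fun A => ⟨TAD.del_nonneg A, TAD.del_le_one A⟩, TAD.del_univ hI ha,
      fun A hA => TAD.del_of_I hI (h_fin A hA),
      fun A B h => TAD.del_mono h,
      fun A B => TAD.del_union_le hI A B⟩
  · intro A m
    constructor
    · rw [TAD.rTrans_eq]
      exact TAD.del_intTrans hI A m
    · rw [TAD.lTrans_eq]
      exact TAD.del_intTrans hI A _
  · apply Set.Subset.antisymm
    · rintro x ⟨A, rfl⟩
      exact ⟨TAD.del_nonneg A, TAD.del_le_one A⟩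
    · rintro x ⟨hx0, hx1⟩
      rcases eq_or_lt_of_le hx0 with h0 | hpos
      · refine ⟨∅, ?_⟩
        rw [TAD.del_of_I hI (h_fin ∅ Set.finite_empty), ← h0]
      · exact ⟨TAD.Wit a x, TAD.del_Wit hI ha hpos hx1⟩
  · intro A
    constructor
    · intro h
      by_contra hA
      exact absurd h (ne_of_gt (TAD.del_pos hI ha hA))
    · exact fun h => TAD.del_of_I hI h
end

section
/- For every non-increasing f : ℕ → [0,∞) with divergent series, there exist increasing functions g, h : ℕ → ℕ and an increasing sequence n_0 < n_1 < n_2 < ⋯ such that: (1) the difference sequences {g(n)−g(n−1)} and {h(n)−h(n−1)} are non-decreasing; (2) g(n)−g(n−1) → ∞; (3) h(n_m)−h(n_m−1) ≥ 2^m for every m ≥ 1; (4) ∑_{n=1}^∞ f(g(h(n))) = ∞. -/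
open scoped Classical
open Filter

/-- If `f` is nonnegative, non-increasing and non-summable, then so is `n ↦ f (c n)`. -/
private lemma aux_not_summable_mul (f : ℕ → ℝ) (hpos : ∀ n, 0 ≤ f n) (hmono : Antitone f)
    (hdiv : ¬ Summable f) (c : ℕ) (hc : 1 ≤ c) : ¬ Summable (fun n => f (c * n)) := by
  intro hS
  apply hdiv
  apply summable_of_sum_range_le (c := (c : ℝ) * (∑' n, f (c * n))) hpos
  intro n
  have key : ∀ N, ∑ i ∈ Finset.range (c * N), f i ≤ (c : ℝ) * ∑ k ∈ Finset.range N, f (c * k) := by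
    intro N
    induction N with
    | zero => simp
    | succ N ih =>
      have h1 : c * (N + 1) = c * N + c := by ring
      rw [h1, Finset.sum_range_succ]
      have h2 : ∑ i ∈ Finset.range (c * N + c), f i
          = ∑ i ∈ Finset.range (c * N), f i + ∑ j ∈ Finset.Ico (c * N) (c * N + c), f j := by
        rw [Finset.range_eq_Ico, Finset.range_eq_Ico]
        exact (Finset.sum_Ico_consecutive f (Nat.zero_le _) (Nat.le_add_right _ _)).symm
      rw [h2]
      have h3 : ∑ j ∈ Finset.Ico (c * N) (c * N + c), f j ≤ (c : ℝ) * f (c * N) := by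
        calc ∑ j ∈ Finset.Ico (c * N) (c * N + c), f j
            ≤ ∑ _j ∈ Finset.Ico (c * N) (c * N + c), f (c * N) :=
              Finset.sum_le_sum (fun j hj => hmono (Finset.mem_Ico.mp hj).1)
          _ = (c : ℝ) * f (c * N) := by
              rw [Finset.sum_const, Nat.card_Ico, Nat.add_sub_cancel_left, nsmul_eq_mul]
      have := add_le_add ih h3
      calc ∑ i ∈ Finset.range (c * N), f i + ∑ j ∈ Finset.Ico (c * N) (c * N + c), f j
          ≤ (c : ℝ) * ∑ k ∈ Finset.range N, f (c * k) + (c : ℝ) * f (c * N) := this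
        _ = (c : ℝ) * (∑ k ∈ Finset.range N, f (c * k) + f (c * N)) := by ring
  calc ∑ i ∈ Finset.range n, f i
      ≤ ∑ i ∈ Finset.range (c * n), f i :=
        Finset.sum_le_sum_of_subset_of_nonneg
          (Finset.range_subset_range.mpr (Nat.le_mul_of_pos_left n hc)) (fun i _ _ => hpos i)
    _ ≤ (c : ℝ) * ∑ k ∈ Finset.range n, f (c * k) := key n
    _ ≤ (c : ℝ) * ∑' k, f (c * k) := by
        have h1 : ∑ k ∈ Finset.range n, f (c * k) ≤ ∑' k, f (c * k) :=
          hS.sum_le_tsum _ (fun i _ => hpos _)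
        have h2 : (0 : ℝ) ≤ c := Nat.cast_nonneg c
        exact mul_le_mul_of_nonneg_left h1 h2

/-- Index of the block (w.r.t. an increasing sequence `u` with `u 0 = 0`) containing `n`. -/
private noncomputable def idxOf (u : ℕ → ℕ) (n : ℕ) : ℕ :=
  Nat.findGreatest (fun k => u k ≤ n) n

private lemma idxOf_le {u : ℕ → ℕ} (h0 : u 0 = 0) (n : ℕ) : u (idxOf u n) ≤ n :=
  Nat.findGreatest_spec (P := fun k => u k ≤ n) (Nat.zero_le n) (by simp [h0])

private lemma idxOf_mono {u : ℕ → ℕ} (hu : StrictMono u) (h0 : u 0 = 0) :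
    Monotone (idxOf u) := by
  intro m n hmn
  exact Nat.le_findGreatest
    (le_trans (le_trans hu.le_apply (idxOf_le h0 m)) hmn)
    (le_trans (idxOf_le h0 m) hmn)

private lemma idxOf_eq {u : ℕ → ℕ} (hu : StrictMono u) (h0 : u 0 = 0) {k j : ℕ}
    (h1 : u k ≤ j) (h2 : j < u (k + 1)) : idxOf u j = k := by
  refine le_antisymm ?_ (Nat.le_findGreatest (le_trans hu.le_apply h1) h1)
  have hle : u (idxOf u j) ≤ j := idxOf_le h0 j
  have : u (idxOf u j) < u (k + 1) := lt_of_le_of_lt hle h2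
  exact Nat.lt_succ_iff.mp (hu.lt_iff_lt.mp this)

/-- Partial sums of powers of two with exponent profile `w`. -/
private noncomputable def psum (w : ℕ → ℕ) (n : ℕ) : ℕ := ∑ j ∈ Finset.range n, 2 ^ (w j)

private lemma psum_zero (w : ℕ → ℕ) : psum w 0 = 0 := Finset.sum_range_zero _

private lemma psum_succ (w : ℕ → ℕ) (n : ℕ) : psum w (n + 1) = psum w n + 2 ^ (w n) :=
  Finset.sum_range_succ _ _

private lemma psum_strictMono (w : ℕ → ℕ) : StrictMono (psum w) :=
  strictMono_nat_of_lt_succ (fun n => by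
    rw [psum_succ]; exact Nat.lt_add_of_pos_right (Nat.pow_pos (by norm_num)))

private lemma psum_diff (w : ℕ → ℕ) (n : ℕ) : psum w (n + 1) - psum w n = 2 ^ (w n) := by
  rw [psum_succ, Nat.add_sub_cancel_left]

private lemma psum_block (w : ℕ → ℕ) {k p n : ℕ} (hpn : p ≤ n)
    (hw : ∀ j, p ≤ j → j < n → w j = k) :
    psum w n = psum w p + (n - p) * 2 ^ k := by
  have h1 : psum w n = psum w p + ∑ j ∈ Finset.Ico p n, 2 ^ (w j) := by
    rw [psum, psum, Finset.range_eq_Ico, Finset.range_eq_Ico]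
    exact (Finset.sum_Ico_consecutive _ (Nat.zero_le _) hpn).symm
  rw [h1]
  congr 1
  calc ∑ j ∈ Finset.Ico p n, 2 ^ (w j) = ∑ j ∈ Finset.Ico p n, 2 ^ k :=
        Finset.sum_congr rfl (fun j hj => by
          rw [hw j (Finset.mem_Ico.mp hj).1 (Finset.mem_Ico.mp hj).2])
    _ = (n - p) * 2 ^ k := by rw [Finset.sum_const, Nat.card_Ico, smul_eq_mul]

theorem exists_g_h_for_summable_ideal
    (f : ℕ → ℝ) (hpos : ∀ n, 0 ≤ f n) (hmono : Antitone f)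
    (hdiv : ¬ Summable f) :
    ∃ (g h : ℕ → ℕ) (s : ℕ → ℕ),
      StrictMono g ∧ StrictMono h ∧ StrictMono s ∧ (∀ m, 0 < s m) ∧
      (∀ n, g (n + 1) - g n ≤ g (n + 2) - g (n + 1)) ∧
      (∀ n, h (n + 1) - h n ≤ h (n + 2) - h (n + 1)) ∧
      Filter.Tendsto (fun n => g (n + 1) - g n) Filter.atTop Filter.atTop ∧
      (∀ m, 1 ≤ m → 2 ^ m ≤ h (s m) - h (s m - 1)) ∧
      ¬ Summable (fun n => f (g (h n))) := by
  -- Step 1: block endpoints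
  have hex : ∀ k p : ℕ, ∃ q, p < q ∧ 1 ≤ ∑ n ∈ Finset.Ioc p q, f (4 ^ k * n) := by
    intro k p
    have hns : ¬ Summable (fun n => f (4 ^ k * n)) :=
      aux_not_summable_mul f hpos hmono hdiv (4 ^ k) (Nat.one_le_pow _ _ (by norm_num))
    rw [not_summable_iff_tendsto_nat_atTop_of_nonneg (fun n => hpos _)] at hns
    obtain ⟨N, hN⟩ :=
      (hns.eventually_ge_atTop (∑ i ∈ Finset.range (p + 1), f (4 ^ k * i) + 1)).exists
    refine ⟨max N (p + 1), lt_of_lt_of_le (Nat.lt_succ_self p) (le_max_right _ _), ?_⟩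
    have hIoc : Finset.Ioc p (max N (p + 1)) = Finset.Ico (p + 1) (max N (p + 1) + 1) := by
      ext x; simp [Nat.lt_succ_iff, Nat.succ_le_iff]
    rw [hIoc, Finset.sum_Ico_eq_sub _ (by omega)]
    have hmonoN : ∑ i ∈ Finset.range N, f (4 ^ k * i)
        ≤ ∑ i ∈ Finset.range (max N (p + 1) + 1), f (4 ^ k * i) :=
      Finset.sum_le_sum_of_subset_of_nonneg
        (Finset.range_subset_range.mpr (by omega)) (fun i _ _ => hpos _)
    linarith
  choose tnext ht1 ht2 using hex
  set t : ℕ → ℕ := fun k => Nat.rec 0 (fun k p => tnext k p) k with htdef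
  have ht0 : t 0 = 0 := rfl
  have htsucc : ∀ k, t (k + 1) = tnext k (t k) := fun _ => rfl
  have htmono : StrictMono t := strictMono_nat_of_lt_succ (fun k => ht1 k (t k))
  have htblock : ∀ k, 1 ≤ ∑ n ∈ Finset.Ioc (t k) (t (k + 1)), f (4 ^ k * n) :=
    fun k => ht2 k (t k)
  -- Step 2: define h
  set b : ℕ → ℕ := idxOf t with hbdef
  set h : ℕ → ℕ := psum b with hhdef
  have hbval : ∀ {k j : ℕ}, t k ≤ j → j < t (k + 1) → b j = k := fun h1 h2 =>
    idxOf_eq htmono ht0 h1 h2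
  have hhmono : StrictMono h := psum_strictMono b
  -- Step 3: define g
  set T : ℕ → ℕ := fun k => h (t k) with hTdef
  have hT0 : T 0 = 0 := by simp [hTdef, ht0, hhdef, psum_zero]
  have hTmono : StrictMono T := hhmono.comp htmono
  set a : ℕ → ℕ := idxOf T with hadef
  set g : ℕ → ℕ := psum a with hgdef
  have haval : ∀ {k j : ℕ}, T k ≤ j → j < T (k + 1) → a j = k := fun h1 h2 =>
    idxOf_eq hTmono hT0 h1 h2
  have hgmono : StrictMono g := psum_strictMono a
  -- h on block k
  have hseg : ∀ k n, t k ≤ n → n ≤ t (k + 1) → h n = T k + (n - t k) * 2 ^ k := by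
    intro k n h1 h2
    exact psum_block b h1 (fun j hj1 hj2 => hbval hj1 (lt_of_lt_of_le hj2 h2))
  -- g ∘ h on block k
  have hgh : ∀ k n, t k ≤ n → n ≤ t (k + 1) → g (h n) = g (T k) + (n - t k) * 4 ^ k := by
    intro k n h1 h2
    have hle : T k ≤ h n := hhmono.monotone h1
    have hlt : h n ≤ T (k + 1) := hhmono.monotone h2
    have h3 : g (h n) = g (T k) + (h n - T k) * 2 ^ k :=
      psum_block a hle (fun j hj1 hj2 => haval hj1 (lt_of_lt_of_le hj2 hlt))
    have h4 : h n - T k = (n - t k) * 2 ^ k := by rw [hseg k n h1 h2, Nat.add_sub_cancel_left]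
    rw [h3, h4, mul_assoc, ← pow_add, ← two_mul]
    norm_num [pow_mul]
  -- bound on g (T k)
  have hGT : ∀ k, g (T k) ≤ 4 ^ k * t k := by
    intro k
    induction k with
    | zero => simp [hT0, hgdef, psum_zero]
    | succ k ih =>
      have hst : t k ≤ t (k + 1) := (htmono (Nat.lt_succ_self k)).le
      have h5 : g (T (k + 1)) = g (T k) + (t (k + 1) - t k) * 4 ^ k := hgh k (t (k + 1)) hst le_rfl
      have h6 : g (T (k + 1)) ≤ 4 ^ k * t (k + 1) := by
        rw [h5]
        calc g (T k) + (t (k + 1) - t k) * 4 ^ k ≤ 4 ^ k * t k + (t (k + 1) - t k) * 4 ^ k :=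
              Nat.add_le_add_right ih _
          _ = 4 ^ k * (t k + (t (k + 1) - t k)) := by ring
          _ = 4 ^ k * t (k + 1) := by rw [Nat.add_sub_cancel' hst]
      calc g (T (k + 1)) ≤ 4 ^ k * t (k + 1) := h6
        _ ≤ 4 ^ (k + 1) * t (k + 1) :=
            Nat.mul_le_mul_right _ (Nat.pow_le_pow_right (by norm_num) (Nat.le_succ k))
  -- bound on blocks
  have hbound : ∀ k n, t k < n → n ≤ t (k + 1) → g (h n) ≤ 4 ^ k * n := by
    intro k n h1 h2
    rw [hgh k n h1.le h2]
    calc g (T k) + (n - t k) * 4 ^ k ≤ 4 ^ k * t k + (n - t k) * 4 ^ k :=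
          Nat.add_le_add_right (hGT k) _
      _ = 4 ^ k * (t k + (n - t k)) := by ring
      _ = 4 ^ k * n := by rw [Nat.add_sub_cancel' h1.le]
  -- block sums for f ∘ g ∘ h
  have hblk : ∀ k, 1 ≤ ∑ n ∈ Finset.Ioc (t k) (t (k + 1)), f (g (h n)) := by
    intro k
    refine le_trans (htblock k) (Finset.sum_le_sum fun n hn => ?_)
    have hn' := Finset.mem_Ioc.mp hn
    exact hmono (hbound k n hn'.1 hn'.2)
  -- partial sums are unbounded
  have hpartial : ∀ K : ℕ, (K : ℝ) ≤ ∑ n ∈ Finset.Ioc 0 (t K), f (g (h n)) := by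
    intro K
    induction K with
    | zero => simp [ht0]
    | succ K ih =>
      have hst : t K ≤ t (K + 1) := (htmono (Nat.lt_succ_self K)).le
      rw [← Finset.sum_Ioc_consecutive _ (Nat.zero_le (t K)) hst]
      push_cast
      linarith [hblk K]
  -- final pieces
  refine ⟨g, h, fun m => t m + 1, hgmono, hhmono,
    fun x y hxy => Nat.succ_lt_succ (htmono hxy), fun m => Nat.succ_pos _,
    ?_, ?_, ?_, ?_, ?_⟩
  · intro n
    rw [hgdef, psum_diff, psum_diff]
    exact Nat.pow_le_pow_right (by norm_num) (idxOf_mono hTmono hT0 (Nat.le_succ n))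
  · intro n
    rw [hhdef, psum_diff, psum_diff]
    exact Nat.pow_le_pow_right (by norm_num) (idxOf_mono htmono ht0 (Nat.le_succ n))
  · have haT : Tendsto a atTop atTop := by
      refine tendsto_atTop_atTop_of_monotone (idxOf_mono hTmono hT0) (fun bb => ⟨T bb, ?_⟩)
      exact le_of_eq (idxOf_eq hTmono hT0 le_rfl (hTmono (Nat.lt_succ_self bb))).symm
    have h2a : Tendsto (fun n => 2 ^ (a n)) atTop atTop :=
      tendsto_atTop_mono (fun n => (Nat.lt_two_pow_self (n := a n)).le) haT
    refine h2a.congr (fun n => ?_)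
    rw [hgdef, psum_diff]
  · intro m _
    have : t m + 1 - 1 = t m := Nat.succ_sub_one _
    rw [this, hhdef, psum_diff, hbval le_rfl (htmono (Nat.lt_succ_self m))]
  · intro hS
    obtain ⟨K, hK⟩ := exists_nat_gt (∑' n, f (g (h n)))
    have h1 : ∑ n ∈ Finset.Ioc 0 (t K), f (g (h n)) ≤ ∑' n, f (g (h n)) :=
      hS.sum_le_tsum _ (fun i _ => hpos _)
    linarith [hpartial K]
end

section
/- For every summable ideal I_f determined by a non-increasing f : ℕ → [0,∞) with divergent series, there exists an I_f-translation-almost-disjoint family of cardinality of the continuum: a family {A_σ : σ ∈ 2^ℕ} of subsets of ℕ, none in I_f, such that for distinct σ, τ and every k ∈ ℤ, (A_σ + k) ∩ A_τ is finite (hence in I_f). -/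
open scoped Classical
open Filter

/-- Encoding of the first `i` bits of `σ` as a natural number. -/
def encB (σ : ℕ → Bool) (i : ℕ) : ℕ := ∑ t ∈ Finset.range i, cond (σ t) (2^t) 0

lemma encB_lt (σ : ℕ → Bool) (i : ℕ) : encB σ i < 2^i := by
  induction i with
  | zero => simp [encB]
  | succ n ih =>
    have h : encB σ (n+1) = encB σ n + cond (σ n) (2^n) 0 := Finset.sum_range_succ _ _
    have hp : (2:ℕ)^(n+1) = 2^n + 2^n := by ring
    cases hσ : σ n <;> simp [hσ] at h <;> omega

lemma encB_inj (σ τ : ℕ → Bool) : ∀ i, encB σ i = encB τ i → ∀ t < i, σ t = τ t := by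
  intro i
  induction i with
  | zero => intro _ t ht; omega
  | succ n ih =>
    intro h t ht
    have hs : encB σ (n+1) = encB σ n + cond (σ n) (2^n) 0 := Finset.sum_range_succ _ _
    have htau : encB τ (n+1) = encB τ n + cond (τ n) (2^n) 0 := Finset.sum_range_succ _ _
    have h1 := encB_lt σ n
    have h2 := encB_lt τ n
    have hb : σ n = τ n ∧ encB σ n = encB τ n := by
      cases hσ : σ n <;> cases hτ : τ n <;> simp [hσ, hτ] at hs htau <;>
        first
          | exact ⟨rfl, by omega⟩
          | (exfalso; omega)
    rcases Nat.lt_succ_iff_lt_or_eq.mp ht with h' | h'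
    · exact ih hb.2 t h'
    · subst h'; exact hb.1

theorem exists_continuum_TAD_family
    (f : ℕ → ℝ) (hpos : ∀ n, 0 ≤ f n) (hmono : Antitone f)
    (hdiv : ¬ Summable f) :
    ∃ A : (ℕ → Bool) → Set ℕ,
      Function.Injective A ∧
      (∀ σ, ¬ MemSummableIdeal f (A σ)) ∧
      ∀ σ τ : ℕ → Bool, σ ≠ τ → ∀ k : ℤ,
        (intTrans (A σ) k ∩ A τ).Finite := by
  -- partial sums tend to infinity
  have htend : Tendsto (fun n => ∑ i ∈ Finset.range n, f i) atTop atTop :=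
    (not_summable_iff_tendsto_nat_atTop_of_nonneg hpos).1 hdiv
  have hnext : ∀ a : ℕ, ∃ b, a < b ∧ 1 ≤ ∑ x ∈ Finset.Ico a b, f x := by
    intro a
    have h1 : ∀ᶠ n in atTop, (∑ i ∈ Finset.range a, f i) + 1 ≤ ∑ i ∈ Finset.range n, f i :=
      htend.eventually_ge_atTop _
    obtain ⟨b, hb1, hb2⟩ := (h1.and (eventually_ge_atTop (a+1))).exists
    refine ⟨b, by omega, ?_⟩
    rw [Finset.sum_Ico_eq_sub f (by omega : a ≤ b)]
    linarith
  choose nxt hlt hsum using hnext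
  -- the intervals
  set lo : ℕ → ℕ := fun n => Nat.rec 0 (fun k ih => nxt ih + k + 1) n with hlo_def
  set hi : ℕ → ℕ := fun n => nxt (lo n) with hhi_def
  have hstep : ∀ n, lo (n+1) = hi n + n + 1 := fun n => rfl
  have hlohi : ∀ n, lo n < hi n := fun n => hlt (lo n)
  have hlomono : Monotone lo := monotone_nat_of_le_succ (fun n => by
    have := hlohi n; rw [hstep]; omega)
  have hgap : ∀ n m, n < m → hi n + n + 1 ≤ lo m := by
    intro n m hnm
    calc hi n + n + 1 = lo (n+1) := (hstep n).symm
    _ ≤ lo m := hlomono hnm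
  set J : ℕ → Finset ℕ := fun n => Finset.Ico (lo n) (hi n) with hJ_def
  have hJsum : ∀ n, 1 ≤ ∑ x ∈ J n, f x := fun n => hsum (lo n)
  have hJmem : ∀ n x, x ∈ J n ↔ lo n ≤ x ∧ x < hi n := by
    intro n x; simp [hJ_def, Finset.mem_Ico]
  -- the family
  set A : (ℕ → Bool) → Set ℕ :=
    fun σ => ⋃ i, (J (Nat.pair i (encB σ i)) : Set ℕ) with hA_def
  have hAmem : ∀ σ x, x ∈ A σ ↔ ∃ i, x ∈ J (Nat.pair i (encB σ i)) := by
    intro σ x; simp [hA_def]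
  -- nonsummability
  have hnonsum : ∀ σ, ¬ MemSummableIdeal f (A σ) := by
    intro σ hS
    have hind : Summable (Set.indicator (A σ) f) :=
      summable_subtype_iff_indicator.1 hS
    have hnn : ∀ x, 0 ≤ Set.indicator (A σ) f x :=
      fun x => Set.indicator_nonneg (fun y _ => hpos y) x
    have key : ∀ K : ℕ, (K : ℝ) ≤ ∑' x, Set.indicator (A σ) f x := by
      intro K
      have hdisj : ∀ i ∈ Finset.range K, ∀ j ∈ Finset.range K, i ≠ j →
          Disjoint (J (Nat.pair i (encB σ i))) (J (Nat.pair j (encB σ j))) := by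
        intro i _ j _ hij
        have hne : Nat.pair i (encB σ i) ≠ Nat.pair j (encB σ j) := by
          intro h; exact hij (Nat.pair_eq_pair.1 h).1
        rw [Finset.disjoint_left]
        intro x hx1 hx2
        rw [hJmem] at hx1 hx2
        rcases lt_or_gt_of_ne hne with h | h
        · have := hgap _ _ h; omega
        · have := hgap _ _ h; omega
      have hsub : ∀ n, (J n : Set ℕ) ⊆ A σ → ∑ x ∈ J n, Set.indicator (A σ) f x = ∑ x ∈ J n, f x := by
        intro n hsubn
        exact Finset.sum_congr rfl (fun x hx => Set.indicator_of_mem (hsubn hx) f)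
      calc (K : ℝ) = ∑ _i ∈ Finset.range K, (1:ℝ) := by simp
        _ ≤ ∑ i ∈ Finset.range K, ∑ x ∈ J (Nat.pair i (encB σ i)), Set.indicator (A σ) f x := by
            refine Finset.sum_le_sum (fun i _ => ?_)
            rw [hsub _ (by
              intro x hx
              exact (hAmem σ x).2 ⟨i, hx⟩)]
            exact hJsum _
        _ = ∑ x ∈ (Finset.range K).biUnion (fun i => J (Nat.pair i (encB σ i))),
              Set.indicator (A σ) f x := (Finset.sum_biUnion (fun i hi j hj hij => hdisj i hi j hj hij)).symm
        _ ≤ ∑' x, Set.indicator (A σ) f x := Summable.sum_le_tsum _ (fun x _ => hnn x) hind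
    obtain ⟨K, hK⟩ := exists_nat_gt (∑' x, Set.indicator (A σ) f x)
    linarith [key K]
  -- translation almost disjointness
  have hTAD : ∀ σ τ : ℕ → Bool, σ ≠ τ → ∀ k : ℤ, (intTrans (A σ) k ∩ A τ).Finite := by
    intro σ τ hne k
    obtain ⟨m, hm⟩ := Function.ne_iff.mp hne
    set P := (Finset.range (m+1)).sup (fun i => hi (Nat.pair i (encB τ i))) with hP
    set S := (Finset.range k.natAbs).sup hi with hS
    apply Set.Finite.subset (Set.finite_Iio (max P (S + k.natAbs)))
    rintro x ⟨⟨a, haA, hxk⟩, hxτ⟩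
    obtain ⟨i, hai⟩ := (hAmem σ a).1 haA
    obtain ⟨j, hxj⟩ := (hAmem τ x).1 hxτ
    rw [hJmem] at hai hxj
    have hk1 : k ≤ (k.natAbs : ℤ) := Int.le_natAbs
    have hk2 : -(k.natAbs : ℤ) ≤ k := by
      have := Int.natAbs_eq k; omega
    simp only [Set.mem_Iio]
    by_cases hEq : Nat.pair i (encB σ i) = Nat.pair j (encB τ j)
    · obtain ⟨hij, henc⟩ := Nat.pair_eq_pair.1 hEq
      subst hij
      have him : i ≤ m := by
        by_contra h
        exact hm (encB_inj σ τ i henc m (by omega))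
      have hle : hi (Nat.pair i (encB τ i)) ≤ P :=
        Finset.le_sup (f := fun i => hi (Nat.pair i (encB τ i)))
          (Finset.mem_range.2 (by omega))
      exact lt_max_iff.2 (Or.inl (lt_of_lt_of_le hxj.2 hle))
    · rcases lt_or_gt_of_ne hEq with hlt' | hlt'
      · have hg := hgap _ _ hlt'
        have hna : Nat.pair i (encB σ i) < k.natAbs := by omega
        have hle : hi (Nat.pair i (encB σ i)) ≤ S :=
          Finset.le_sup (Finset.mem_range.2 hna)
        refine lt_max_iff.2 (Or.inr ?_)
        omega
      · have hg := hgap _ _ hlt'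
        have hna : Nat.pair j (encB τ j) < k.natAbs := by omega
        have hle : hi (Nat.pair j (encB τ j)) ≤ S :=
          Finset.le_sup (Finset.mem_range.2 hna)
        refine lt_max_iff.2 (Or.inr ?_)
        omega
  refine ⟨A, ?_, hnonsum, hTAD⟩
  intro σ τ hAeq
  by_contra hne
  have hfin := hTAD σ τ hne 0
  have h0 : intTrans (A σ) 0 = A σ := by
    ext x
    constructor
    · rintro ⟨a, ha, hx⟩
      have hxa : x = a := by
        have : (x : ℤ) = (a : ℤ) := by simpa using hx
        exact_mod_cast this
      rwa [hxa]
    · intro hx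
      exact ⟨x, hx, by simp⟩
  rw [h0, hAeq, Set.inter_self] at hfin
  have := hfin.to_subtype
  exact hnonsum τ Summable.of_finite
end
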